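/- arXiv:1708.02712 — 6 statements merged into one kernel-verified Lean document; each statement's English description precedes it below -/
import Mathlib

section
/- Let B : [0,∞) → ℝ be a continuous function with B(0) = 0, let a ∈ ℝ, σ > 0, x₀ > 0, and let Y : [0,∞) → ℝ be a continuous function satisfying Y(t) = √x₀ + a∫₀ᵗ Y(s) ds + σ B(t) for all t ≥ 0. Let τ := inf{t > 0 : Y(t) = 0} (with inf ∅ = +∞), fix t with 0 < t < τ, and set X(s) := Y(s)² for s ∈ [0,t]. Then for every sequence of partitions 0 = t₀ⁿ < t₁ⁿ < … < t_{kₙ}ⁿ = t of [0,t] whose mesh tends to 0, the Stratonovich sums Sₙ := Σ_{k=1}^{kₙ} ((√X(t_kⁿ) + √X(t_{k−1}ⁿ))/2)·(B(t_kⁿ) − B(t_{k−1}ⁿ)) converge to (X(t) − x₀ − 2a∫₀ᵗ X(s) ds)/(2σ). In other words, the pathwise Stratonovich integral ∫₀ᵗ √X(s) ∘ dB(s) exists and X(t) = x₀ + 2a∫₀ᵗ X(s) ds + 2σ ∫₀ᵗ √X(s) ∘ dB(s). -/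
/-!
On `[0, t]` the path `Y` stays positive, so `√X = Y` there. Subtracting the integral equation at
two times gives `Y u - Y v = a ∫ᵥᵘ Y + σ (B u - B v)`, so each Stratonovich increment
`(Y u + Y v)/2 · (B u - B v)` equals `(Y u² - Y v²)/(2σ)` minus `(a/σ) · (Y u + Y v)/2 · ∫ᵥᵘ Y`.
The first parts telescope to `(X t - x₀)/(2σ)`; the second parts form a trapezoid-type Riemann
sum, which converges to `(a/σ) ∫₀ᵗ Y²` by uniform continuity of `Y`.
-/

open MeasureTheory Filter Set Topology

theorem Fin.sum_succ_sub_castSucc {M : Type*} [AddCommGroup M] {m : ℕ} (g : Fin (m + 1) → M) :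
    ∑ i : Fin m, (g i.succ - g i.castSucc) = g (Fin.last m) - g 0 := by
  induction m with
  | zero => simp
  | succ m ih =>
    have hinit := ih fun j => g j.castSucc
    rw [Fin.castSucc_zero] at hinit
    rw [Fin.sum_univ_castSucc]
    simp only [Fin.succ_castSucc, hinit, Fin.succ_last]
    abel

noncomputable def partitionMesh {m : ℕ} (p : Fin (m + 1) → ℝ) : ℝ :=
  ⨆ i : Fin m, (p i.succ - p i.castSucc)

section Partition

variable {m : ℕ} {p : Fin (m + 1) → ℝ} {a b : ℝ}

theorem sub_le_partitionMesh (p : Fin (m + 1) → ℝ) (i : Fin m) :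
    p i.succ - p i.castSucc ≤ partitionMesh p :=
  le_ciSup (f := fun i : Fin m => p i.succ - p i.castSucc) (Set.finite_range _).bddAbove i

theorem Monotone.Icc_castSucc_succ_subset (hp : Monotone p) (i : Fin m) :
    Icc (p i.castSucc) (p i.succ) ⊆ Icc (p 0) (p (Fin.last m)) :=
  Icc_subset_Icc (hp (Fin.zero_le _)) (hp (Fin.le_last _))

theorem integral_eq_sum_integral_of_monotone (hp : Monotone p) (h0 : p 0 = a)
    (hm : p (Fin.last m) = b) {f : ℝ → ℝ} (hf : ContinuousOn f (Icc a b)) :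
    ∫ x in a..b, f x = ∑ i : Fin m, ∫ x in p i.castSucc..p i.succ, f x := by
  subst h0 hm
  have hI (j : Fin (m + 1)) : IntervalIntegrable f volume (p 0) (p j) :=
    (hf.mono (by
      rw [uIcc_of_le (hp (Fin.zero_le j))]
      exact Icc_subset_Icc_right (hp (Fin.le_last j)))).intervalIntegrable
  calc ∫ x in p 0..p (Fin.last m), f x
      = (∫ x in p 0..p (Fin.last m), f x) - ∫ x in p 0..p 0, f x := by simp
    _ = ∑ i : Fin m, ((∫ x in p 0..p i.succ, f x) - ∫ x in p 0..p i.castSucc, f x) :=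
      (Fin.sum_succ_sub_castSucc fun j => ∫ x in p 0..p j, f x).symm
    _ = _ := Finset.sum_congr rfl fun i _ =>
      intervalIntegral.integral_interval_sub_left (hI _) (hI _)

theorem abs_trapezoid_mul_integral_sub_integral_le {f g : ℝ → ℝ} {u v ε M : ℝ} (hvu : v ≤ u)
    (hf : ContinuousOn f (Icc v u)) (hg : ContinuousOn g (Icc v u))
    (hfε : ∀ x ∈ Icc v u, |(f u + f v) / 2 - f x| ≤ ε) (hgM : ∀ x ∈ Icc v u, |g x| ≤ M) :
    |(f u + f v) / 2 * (∫ x in v..u, g x) - ∫ x in v..u, f x * g x| ≤ ε * M * (u - v) := by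
  have hgi : IntervalIntegrable g volume v u := hg.intervalIntegrable_of_Icc hvu
  have hfgi : IntervalIntegrable (fun x => f x * g x) volume v u :=
    (hf.mul hg).intervalIntegrable_of_Icc hvu
  rw [← intervalIntegral.integral_const_mul,
    ← intervalIntegral.integral_sub (hgi.const_mul _) hfgi]
  have hbound : ∀ x ∈ uIoc v u, ‖(f u + f v) / 2 * g x - f x * g x‖ ≤ ε * M := fun x hx => by
    have hx' : x ∈ Icc v u := Ioc_subset_Icc_self (by rwa [uIoc_of_le hvu] at hx)
    rw [Real.norm_eq_abs, ← sub_mul, abs_mul]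
    exact mul_le_mul (hfε x hx') (hgM x hx') (abs_nonneg _) ((abs_nonneg _).trans (hfε x hx'))
  simpa [abs_of_nonneg (sub_nonneg.2 hvu)] using
    intervalIntegral.norm_integral_le_of_norm_le_const hbound

theorem abs_sum_trapezoid_sub_integral_le (hp : Monotone p) (h0 : p 0 = a)
    (hm : p (Fin.last m) = b) {f g : ℝ → ℝ} {ε M : ℝ}
    (hf : ContinuousOn f (Icc a b)) (hg : ContinuousOn g (Icc a b))
    (hfε : ∀ x ∈ Icc a b, ∀ y ∈ Icc a b, dist x y ≤ partitionMesh p → dist (f x) (f y) ≤ ε)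
    (hgM : ∀ x ∈ Icc a b, |g x| ≤ M) :
    |(∑ i : Fin m, (f (p i.succ) + f (p i.castSucc)) / 2 * ∫ x in p i.castSucc..p i.succ, g x)
      - ∫ x in a..b, f x * g x| ≤ ε * M * (b - a) := by
  rw [integral_eq_sum_integral_of_monotone hp h0 hm (f := fun x => f x * g x) (hf.mul hg), ← Finset.sum_sub_distrib,
    ← h0, ← hm, ← Fin.sum_succ_sub_castSucc p, Finset.mul_sum]
  subst h0 hm
  refine (Finset.abs_sum_le_sum_abs _ _).trans (Finset.sum_le_sum fun i _ => ?_)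
  have hsub := hp.Icc_castSucc_succ_subset i
  have hvu : p i.castSucc ≤ p i.succ := hp (Fin.castSucc_le_succ i)
  refine abs_trapezoid_mul_integral_sub_integral_le hvu (hf.mono hsub) (hg.mono hsub)
    (fun x hx => ?_) (fun x hx => hgM x (hsub hx))
  have hmesh := sub_le_partitionMesh p i
  have hu := hfε _ (hsub (right_mem_Icc.2 hvu)) x (hsub hx) (by
    rw [Real.dist_eq, abs_sub_le_iff]; constructor <;> linarith [hx.1, hx.2])
  have hv := hfε _ (hsub (left_mem_Icc.2 hvu)) x (hsub hx) (by
    rw [Real.dist_eq, abs_sub_le_iff]; constructor <;> linarith [hx.1, hx.2])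
  rw [Real.dist_eq, abs_le] at hu hv
  exact abs_le.2 ⟨by linarith, by linarith⟩

theorem tendsto_sum_trapezoid_mul_integral {ι : Type*} {l : Filter ι} {f g : ℝ → ℝ}
    (hf : ContinuousOn f (Icc a b)) (hg : ContinuousOn g (Icc a b))
    {k : ι → ℕ} {p : (n : ι) → Fin (k n + 1) → ℝ} (hp : ∀ n, Monotone (p n))
    (hfirst : ∀ n, p n 0 = a) (hlast : ∀ n, p n (Fin.last (k n)) = b)
    (hmesh : Tendsto (fun n => partitionMesh (p n)) l (𝓝 0)) :
    Tendsto (fun n => ∑ i : Fin (k n),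
        (f (p n i.succ) + f (p n i.castSucc)) / 2 * ∫ x in p n i.castSucc..p n i.succ, g x)
      l (𝓝 (∫ x in a..b, f x * g x)) := by
  obtain ⟨M, hM⟩ := isCompact_Icc.exists_bound_of_continuousOn hg
  have hgM : ∀ x ∈ Icc a b, |g x| ≤ |M| := fun x hx => (hM x hx).trans (le_abs_self M)
  rw [Metric.tendsto_nhds]
  intro ε hε
  set C := |M| * |b - a| + 1
  have hC : 0 < C := by positivity
  obtain ⟨δ, hδ, hfδ⟩ := Metric.uniformContinuousOn_iff_le.1
    (isCompact_Icc.uniformContinuousOn_of_continuous hf) (ε / C) (div_pos hε hC)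
  filter_upwards [hmesh.eventually (ge_mem_nhds hδ)] with n hn
  rw [Real.dist_eq]
  calc _ ≤ ε / C * |M| * (b - a) :=
        abs_sum_trapezoid_sub_integral_le (hp n) (hfirst n) (hlast n) hf hg
          (fun x hx y hy hxy => hfδ x hx y hy (hxy.trans hn)) hgM
    _ ≤ ε / C * (|M| * |b - a|) := by
        rw [mul_assoc]; gcongr; exact le_abs_self _
    _ < ε / C * C := by gcongr; linarith
    _ = ε := div_mul_cancel₀ ε hC.ne'

end Partition

theorem pos_of_mem_Icc_of_lt_sInf_zeros {Y : ℝ → ℝ} (hY : ContinuousOn Y (Ici 0)) (hY0 : 0 < Y 0)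
    {t : ℝ} (ht : (t : EReal) < sInf {x : EReal | ∃ s : ℝ, 0 < s ∧ Y s = 0 ∧ x = (s : ℝ)})
    {s : ℝ} (hs : s ∈ Icc 0 t) : 0 < Y s := by
  by_contra! h
  obtain ⟨c, hc, hYc⟩ := intermediate_value_Icc' hs.1 (hY.mono Icc_subset_Ici_self) ⟨h, hY0.le⟩
  have hc0 : 0 < c := lt_of_le_of_ne hc.1 (by rintro rfl; exact hY0.ne' hYc)
  have htc : (t : EReal) < c := ht.trans_le (sInf_le ⟨c, hc0, hYc, rfl⟩)
  exact (EReal.coe_lt_coe_iff.1 htc).not_ge (hc.2.trans hs.2)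

section IntegralEquation

variable {B Y : ℝ → ℝ} {a σ y₀ : ℝ}

theorem sub_eq_integral_add_sub_of_integral_equation (hY : ContinuousOn Y (Ici 0))
    (hYeq : ∀ t ≥ (0 : ℝ), Y t = y₀ + a * (∫ s in (0 : ℝ)..t, Y s) + σ * B t)
    {u v : ℝ} (hu : 0 ≤ u) (hv : 0 ≤ v) :
    Y u - Y v = a * (∫ s in v..u, Y s) + σ * (B u - B v) := by
  have hI (w : ℝ) (hw : 0 ≤ w) : IntervalIntegrable Y volume 0 w :=
    (hY.mono (by rw [uIcc_of_le hw]; exact Icc_subset_Ici_self)).intervalIntegrable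
  rw [← intervalIntegral.integral_interval_sub_left (hI u hu) (hI v hv), hYeq u hu, hYeq v hv]
  ring

theorem sum_trapezoid_mul_sub_eq_of_integral_equation (hσ : σ ≠ 0) (hY : ContinuousOn Y (Ici 0))
    (hYeq : ∀ t ≥ (0 : ℝ), Y t = y₀ + a * (∫ s in (0 : ℝ)..t, Y s) + σ * B t)
    {m : ℕ} {p : Fin (m + 1) → ℝ} (hp : ∀ i, 0 ≤ p i) :
    ∑ i : Fin m, (Y (p i.succ) + Y (p i.castSucc)) / 2 * (B (p i.succ) - B (p i.castSucc))
      = ((Y (p (Fin.last m)) ^ 2 - Y (p 0) ^ 2) / 2 - a * ∑ i : Fin m,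
          (Y (p i.succ) + Y (p i.castSucc)) / 2 * ∫ s in p i.castSucc..p i.succ, Y s) / σ := by
  have hterm (i : Fin m) :
      (Y (p i.succ) + Y (p i.castSucc)) / 2 * (B (p i.succ) - B (p i.castSucc))
        = ((Y (p i.succ) ^ 2 / 2 - Y (p i.castSucc) ^ 2 / 2) - a *
          ((Y (p i.succ) + Y (p i.castSucc)) / 2 * ∫ s in p i.castSucc..p i.succ, Y s)) / σ := by
    have h := sub_eq_integral_add_sub_of_integral_equation hY hYeq (hp i.succ) (hp i.castSucc)
    rw [eq_div_iff hσ]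
    linear_combination (-(Y (p i.succ) + Y (p i.castSucc)) / 2) * h
  rw [Finset.sum_congr rfl fun i _ => hterm i, ← Finset.sum_div, Finset.sum_sub_distrib,
    ← Finset.mul_sum, Fin.sum_succ_sub_castSucc fun j => Y (p j) ^ 2 / 2]
  ring

end IntegralEquation

theorem stratonovich_sums_of_squared_OU_converge_general
    (B Y : ℝ → ℝ) (a σ x₀ : ℝ) (hσ : 0 < σ) (hx₀ : 0 < x₀)
    (hB0 : B 0 = 0)
    (hYcont : ContinuousOn Y (Set.Ici 0))
    (hYeq : ∀ t ≥ (0:ℝ), Y t = Real.sqrt x₀ + a * (∫ s in (0:ℝ)..t, Y s) + σ * B t)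
    (t : ℝ)
    (htτ : (t : EReal) < sInf {x : EReal | ∃ s : ℝ, 0 < s ∧ Y s = 0 ∧ x = (s : ℝ)})
    (X : ℝ → ℝ) (hX : ∀ s, X s = (Y s) ^ 2)
    (k : ℕ → ℕ) (p : (n : ℕ) → Fin (k n + 1) → ℝ)
    (hmono : ∀ n, StrictMono (p n))
    (hfirst : ∀ n, p n 0 = 0)
    (hlast : ∀ n, p n (Fin.last (k n)) = t)
    (hmesh : Filter.Tendsto
      (fun n => ⨆ i : Fin (k n), (p n i.succ - p n i.castSucc))
      Filter.atTop (nhds 0)) :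
    Filter.Tendsto
      (fun n => ∑ i : Fin (k n),
        (Real.sqrt (X (p n i.succ)) + Real.sqrt (X (p n i.castSucc))) / 2
          * (B (p n i.succ) - B (p n i.castSucc)))
      Filter.atTop
      (nhds ((X t - x₀ - 2 * a * ∫ s in (0:ℝ)..t, X s) / (2 * σ))) := by
  have hY0 : Y 0 = Real.sqrt x₀ := by simpa [hB0] using hYeq 0 le_rfl
  have hmem (n : ℕ) (i : Fin (k n + 1)) : p n i ∈ Icc 0 t := by
    rw [← hfirst n, ← hlast n]
    exact ⟨(hmono n).monotone (Fin.zero_le i), (hmono n).monotone (Fin.le_last i)⟩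
  have hsqrtX (n : ℕ) (i : Fin (k n + 1)) : Real.sqrt (X (p n i)) = Y (p n i) := by
    rw [hX, Real.sqrt_sq (pos_of_mem_Icc_of_lt_sInf_zeros hYcont
      (hY0 ▸ Real.sqrt_pos.2 hx₀) htτ (hmem n i)).le]
  have hsum (n : ℕ) := sum_trapezoid_mul_sub_eq_of_integral_equation hσ.ne' hYcont hYeq
    (fun i => (hmem n i).1)
  simp only [hlast, hfirst, hY0, Real.sq_sqrt hx₀.le, ← hX] at hsum
  have hR := tendsto_sum_trapezoid_mul_integral (hYcont.mono Icc_subset_Ici_self)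
    (hYcont.mono Icc_subset_Ici_self) (fun n => (hmono n).monotone) hfirst hlast hmesh
  have hval : (X t - x₀ - 2 * a * ∫ s in (0:ℝ)..t, X s) / (2 * σ)
      = ((X t - x₀) / 2 - a * ∫ s in (0:ℝ)..t, Y s * Y s) / σ := by
    simp only [hX, ← sq]
    field_simp
  simp only [hsqrtX, hsum, hval]
  exact ((hR.const_mul a).const_sub _).div_const σ

/-- Let `B : [0,∞) → ℝ` be continuous with `B 0 = 0`, and let `Y` be a continuous solution of
`Y t = √x₀ + a ∫₀ᵗ Y + σ B t` on `[0,∞)`. Let `τ = inf{t > 0 : Y t = 0}` (`= +∞` if the set is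
empty), fix `0 < t < τ` and set `X s = (Y s)²`. Then along any sequence of partitions of `[0,t]`
with mesh tending to `0`, the Stratonovich sums
`Σ ((√X(t_k) + √X(t_{k-1}))/2)(B(t_k) − B(t_{k-1}))` converge to
`(X t − x₀ − 2a ∫₀ᵗ X)/(2σ)`; i.e. `∫₀ᵗ √X ∘ dB` exists pathwise and
`X t = x₀ + 2a ∫₀ᵗ X ds + 2σ ∫₀ᵗ √X ∘ dB`. -/
theorem stratonovich_sums_of_squared_OU_converge
    (B Y : ℝ → ℝ) (a σ x₀ : ℝ) (hσ : 0 < σ) (hx₀ : 0 < x₀)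
    (hBcont : ContinuousOn B (Set.Ici 0)) (hB0 : B 0 = 0)
    (hYcont : ContinuousOn Y (Set.Ici 0))
    (hYeq : ∀ t ≥ (0:ℝ), Y t = Real.sqrt x₀ + a * (∫ s in (0:ℝ)..t, Y s) + σ * B t)
    (t : ℝ) (ht : 0 < t)
    (htτ : (t : EReal) < sInf {x : EReal | ∃ s : ℝ, 0 < s ∧ Y s = 0 ∧ x = (s : ℝ)})
    (X : ℝ → ℝ) (hX : ∀ s, X s = (Y s) ^ 2)
    (k : ℕ → ℕ) (p : (n : ℕ) → Fin (k n + 1) → ℝ)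
    (hmono : ∀ n, StrictMono (p n))
    (hfirst : ∀ n, p n 0 = 0)
    (hlast : ∀ n, p n (Fin.last (k n)) = t)
    (hmesh : Filter.Tendsto
      (fun n => ⨆ i : Fin (k n), (p n i.succ - p n i.castSucc))
      Filter.atTop (nhds 0)) :
    Filter.Tendsto
      (fun n => ∑ i : Fin (k n),
        (Real.sqrt (X (p n i.succ)) + Real.sqrt (X (p n i.castSucc))) / 2
          * (B (p n i.succ) - B (p n i.castSucc)))
      Filter.atTop
      (nhds ((X t - x₀ - 2 * a * ∫ s in (0:ℝ)..t, X s) / (2 * σ))) :=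
  stratonovich_sums_of_squared_OU_converge_general B Y a σ x₀ hσ hx₀ hB0 hYcont hYeq t htτ X hX k p
    hmono hfirst hlast hmesh
end

section
/- Let H ∈ (0,1), let B^H be a fractional Brownian motion with Hurst parameter H on a probability space (Ω, F, P), let a < 0, and set J_t := e^{−at} B^H_t + a ∫₀ᵗ e^{−as} B^H_s ds (a pathwise integral, defined using the almost sure continuity of the sample paths). Then P( limsup_{t→∞} J_t = +∞ ) = 1. -/
open MeasureTheory ProbabilityTheory Filter Set

noncomputable section

/-- The covariance function of fractional Brownian motion with Hurst parameter `H`: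
`ρ_H(t,s) = (t^{2H} + s^{2H} − |t−s|^{2H})/2`. -/
def fbmCov (H t s : ℝ) : ℝ := (t ^ (2 * H) + s ^ (2 * H) - |t - s| ^ (2 * H)) / 2

/-- A process `B` is a fractional Brownian motion with Hurst parameter `H` under the
probability measure `P` if `B 0 = 0`, almost all sample paths are continuous on `[0,∞)`,
and every finite linear combination `Σ cᵢ B_{tᵢ}` (with `tᵢ ≥ 0`) is a centered Gaussian
random variable with variance `Σᵢⱼ cᵢ cⱼ ρ_H(tᵢ,tⱼ)`. -/
structure IsFractionalBrownianMotion {Ω : Type*} [MeasurableSpace Ω] (P : Measure Ω)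
    (H : ℝ) (B : ℝ → Ω → ℝ) : Prop where
  init : ∀ ω, B 0 ω = 0
  cont : ∀ᵐ ω ∂P, ContinuousOn (fun t => B t ω) (Set.Ici 0)
  gaussian : ∀ (n : ℕ) (t : Fin n → ℝ) (c : Fin n → ℝ), (∀ i, 0 ≤ t i) →
    Measure.map (fun ω => ∑ i, c i * B (t i) ω) P =
      gaussianReal 0 (∑ i, ∑ j, c i * c j * fbmCov H (t i) (t j)).toNNReal

/-- The pathwise integral `J_t = e^{−at} B_t + a ∫₀ᵗ e^{−as} B_s ds`. -/
def fbmJ {Ω : Type*} (a : ℝ) (B : ℝ → Ω → ℝ) (t : ℝ) (ω : Ω) : ℝ :=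
  Real.exp (-(a * t)) * B t ω + a * ∫ s in (0:ℝ)..t, Real.exp (-(a * s)) * B s ω

end

/-!
Fix levels `M` and `T`. Along geometric times `t_k = T₀ r⁻ᵏ` the normalised values
`X_k = 2 B_{t_k} / t_k^H` are centred Gaussians of variance 4 with pairwise covariances at most
`4ε`, because `ρ_H(s,t) ≤ ((s/t)^H / 2 + (s/t)^{1-H}) s^H t^H`. The Gaussian moment generating
function makes the mean `e²` and the covariances of the `exp X_k` explicit, while on the event
`{B_t ≤ M for all t ≥ T}` every `exp X_k` is at most `e`; Chebyshev's inequality for their sum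
bounds the probability of that event by `O(1/n + ε)`. So almost surely `B` is unbounded above
at infinity. At a time `τ` where `B` attains its maximum over `[0, τ]`,
`J_τ - B_τ = a ∫₀^τ e^{-as} (B_s - B_τ) ds ≥ 0` because `a < 0`, and such times exist with
`B_τ` arbitrarily large.
-/

open Real Topology
open scoped NNReal

lemma one_sub_one_sub_rpow_le {p x : ℝ} (hp0 : 0 ≤ p) (hp2 : p ≤ 2) (hx0 : 0 ≤ x)
    (hx1 : x ≤ 1) : 1 - (1 - x) ^ p ≤ 2 * x := by
  rcases le_total p 1 with hp1 | hp1
  · have : (1 - x) ^ (1 : ℝ) ≤ (1 - x) ^ p :=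
      rpow_le_rpow_of_exponent_ge' (by linarith) (by linarith) hp0 hp1
    rw [rpow_one] at this
    linarith
  · have : 1 + p * -x ≤ (1 + -x) ^ p := one_add_mul_self_le_rpow_one_add (by linarith) hp1
    rw [← sub_eq_add_neg] at this
    nlinarith

lemma rpow_sub_rpow_sub_le {p s t : ℝ} (hp0 : 0 ≤ p) (hp2 : p ≤ 2) (hs : 0 ≤ s)
    (hst : s ≤ t) : t ^ p - (t - s) ^ p ≤ 2 * s * t ^ (p - 1) := by
  rcases (hs.trans hst).eq_or_lt with rfl | ht
  · obtain rfl : s = 0 := le_antisymm hst hs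
    simp
  have hx : s / t ≤ 1 := (div_le_one ht).2 hst
  have hsplit : t - s = t * (1 - s / t) := by field_simp
  calc t ^ p - (t - s) ^ p = t ^ p * (1 - (1 - s / t) ^ p) := by
        rw [hsplit, mul_rpow ht.le (by linarith)]; ring
    _ ≤ t ^ p * (2 * (s / t)) := by
        gcongr; exact one_sub_one_sub_rpow_le hp0 hp2 (by positivity) hx
    _ = 2 * s * t ^ (p - 1) := by rw [rpow_sub_one ht.ne']; field_simp

lemma sq_two_div_rpow_mul_rpow_two_mul {t : ℝ} (ht : 0 < t) (H : ℝ) :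
    (2 / t ^ H) ^ 2 * t ^ (2 * H) = 4 := by
  rw [mul_comm 2 H, rpow_mul ht.le, rpow_two]
  field_simp
  norm_num

lemma fbmCov_comm (H s t : ℝ) : fbmCov H s t = fbmCov H t s := by
  rw [fbmCov, fbmCov, abs_sub_comm, add_comm (s ^ _)]

lemma fbmCov_self {H : ℝ} (hH : H ≠ 0) (t : ℝ) : fbmCov H t t = t ^ (2 * H) := by
  simp [fbmCov, zero_rpow (mul_ne_zero two_ne_zero hH)]

lemma fbmCov_nonneg {H s t : ℝ} (hH : 0 ≤ H) (hs : 0 ≤ s) (ht : 0 ≤ t) :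
    0 ≤ fbmCov H s t := by
  wlog hst : s ≤ t generalizing s t
  · exact fbmCov_comm H s t ▸ this ht hs (le_of_not_ge hst)
  have : |s - t| ^ (2 * H) ≤ t ^ (2 * H) := by
    rw [abs_sub_comm, abs_of_nonneg (sub_nonneg.2 hst)]
    gcongr; linarith
  unfold fbmCov
  linarith [rpow_nonneg hs (2 * H)]

lemma fbmCov_le {H s t : ℝ} (hH0 : 0 ≤ H) (hH1 : H ≤ 1) (hs : 0 < s) (hst : s ≤ t) :
    fbmCov H s t ≤ ((s / t) ^ H / 2 + (s / t) ^ (1 - H)) * (s ^ H * t ^ H) := by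
  have ht : 0 < t := hs.trans_le hst
  have hdiff := rpow_sub_rpow_sub_le (p := 2 * H) (by linarith) (by linarith) hs.le hst
  have h1 : (s / t) ^ H * (s ^ H * t ^ H) = s ^ (2 * H) := by
    rw [div_rpow hs.le ht.le, two_mul, rpow_add hs]; field_simp
  have h2 : (s / t) ^ (1 - H) * (s ^ H * t ^ H) = s * t ^ (2 * H - 1) := by
    rw [div_rpow hs.le ht.le, rpow_sub hs, rpow_sub ht, rpow_sub ht, rpow_one, rpow_one,
      two_mul, rpow_add ht]
    field_simp
  rw [fbmCov, abs_sub_comm, abs_of_nonneg (sub_nonneg.2 hst), add_mul, div_mul_eq_mul_div, h1,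
    h2]
  linarith

lemma exists_fbmCov_le_of_le_mul {H ε : ℝ} (hH0 : 0 < H) (hH1 : H < 1) (hε : 0 < ε) :
    ∃ r ∈ Ioo (0 : ℝ) 1, ∀ s t, 0 < s → s ≤ r * t →
      fbmCov H s t ≤ ε * (s ^ H * t ^ H) := by
  set f : ℝ → ℝ := fun x ↦ x ^ H / 2 + x ^ (1 - H)
  have hf : Tendsto f (𝓝[>] 0) (𝓝 0) := by
    have hcont : ContinuousAt f 0 :=
      ((continuousAt_rpow_const 0 H (.inr hH0.le)).div_const 2).add
        (continuousAt_rpow_const 0 (1 - H) (.inr (by linarith)))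
    have hf0 : f 0 = 0 := by simp [f, zero_rpow hH0.ne', zero_rpow (by linarith : 1 - H ≠ 0)]
    exact (hf0 ▸ hcont.tendsto).mono_left nhdsWithin_le_nhds
  obtain ⟨r, hfr, hr⟩ := ((hf.eventually (ge_mem_nhds hε)).and (Ioo_mem_nhdsGT one_pos)).exists
  refine ⟨r, hr, fun s t hs hsr ↦ ?_⟩
  have ht : 0 < t := pos_of_mul_pos_right (hs.trans_le hsr) hr.1.le
  have hst : s / t ≤ r := (div_le_iff₀ ht).2 hsr
  have hmono : f (s / t) ≤ f r := by
    have := (div_pos hs ht).le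
    simp only [f]
    gcongr
  calc fbmCov H s t ≤ f (s / t) * (s ^ H * t ^ H) :=
        fbmCov_le hH0.le hH1.le hs (hsr.trans (by nlinarith [hr.2]))
    _ ≤ ε * (s ^ H * t ^ H) := by gcongr; exact hmono.trans hfr

lemma exists_fin_fbmCov_le {H ε T : ℝ} (hH0 : 0 < H) (hH1 : H < 1) (hε : 0 < ε) (hT : 0 < T)
    (n : ℕ) : ∃ t : Fin n → ℝ, (∀ k, T ≤ t k) ∧
      ∀ j k, j ≠ k → fbmCov H (t j) (t k) ≤ ε * (t j ^ H * t k ^ H) := by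
  obtain ⟨r, ⟨hr0, hr1⟩, hr⟩ := exists_fbmCov_le_of_le_mul hH0 hH1 hε
  have hr1' : 1 ≤ r⁻¹ := one_le_inv₀ hr0 |>.2 hr1.le
  refine ⟨fun k ↦ T * r⁻¹ ^ (k : ℕ),
    fun k ↦ le_mul_of_one_le_right hT.le (one_le_pow₀ hr1'), fun j k hjk ↦ ?_⟩
  wlog hlt : j < k generalizing j k
  · rw [fbmCov_comm, mul_comm (_ ^ H)]
    exact this k j hjk.symm (hjk.lt_or_gt.resolve_left hlt)
  refine hr _ _ (by positivity) ?_
  calc T * r⁻¹ ^ (j : ℕ) = r * (T * r⁻¹ ^ ((j : ℕ) + 1)) := by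
        rw [pow_succ]; field_simp
    _ ≤ r * (T * r⁻¹ ^ (k : ℕ)) := by gcongr; exact hlt

section Gaussian

variable {Ω : Type*} [MeasurableSpace Ω] {P : Measure Ω} {X Y : Ω → ℝ} {u v w : ℝ≥0}

lemma integrable_exp_mul_of_map_eq_gaussianReal [NeZero P] (hX : P.map X = gaussianReal 0 v)
    (c : ℝ) : Integrable (fun ω ↦ exp (c * X ω)) P :=
  mgf_pos_iff.1 (by rw [mgf_gaussianReal hX]; exact exp_pos _)

lemma integral_exp_of_map_eq_gaussianReal (hX : P.map X = gaussianReal 0 v) :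
    P[fun ω ↦ exp (X ω)] = exp (v / 2) := by
  simpa [mgf] using mgf_gaussianReal hX 1

lemma memLp_exp_of_map_eq_gaussianReal [NeZero P] (hX : P.map X = gaussianReal 0 v) :
    MemLp (fun ω ↦ exp (X ω)) 2 P := by
  have hXm : AEMeasurable X P := aemeasurable_of_map_neZero (by rw [hX]; infer_instance)
  refine (memLp_two_iff_integrable_sq hXm.exp.aestronglyMeasurable).2 ?_
  simpa [sq, ← exp_add, ← two_mul] using integrable_exp_mul_of_map_eq_gaussianReal hX 2

lemma covariance_exp_of_map_eq_gaussianReal [IsProbabilityMeasure P]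
    (hX : P.map X = gaussianReal 0 v) (hY : P.map Y = gaussianReal 0 w)
    (hXY : P.map (fun ω ↦ X ω + Y ω) = gaussianReal 0 u) :
    cov[fun ω ↦ exp (X ω), fun ω ↦ exp (Y ω); P] = exp (u / 2) - exp ((v + w) / 2) := by
  have hprod : (fun ω ↦ exp (X ω)) * (fun ω ↦ exp (Y ω)) = fun ω ↦ exp (X ω + Y ω) :=
    funext fun ω ↦ (exp_add _ _).symm
  rw [covariance_eq_sub (memLp_exp_of_map_eq_gaussianReal hX)
    (memLp_exp_of_map_eq_gaussianReal hY), hprod, integral_exp_of_map_eq_gaussianReal hXY,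
    integral_exp_of_map_eq_gaussianReal hX, integral_exp_of_map_eq_gaussianReal hY, ← exp_add,
    add_div]

end Gaussian

lemma measure_forall_le_sub_le {Ω ι : Type*} [MeasurableSpace Ω] {P : Measure Ω}
    [IsProbabilityMeasure P] [Fintype ι] [Nonempty ι] {Z : ι → Ω → ℝ}
    (hZ : ∀ i, MemLp (Z i) 2 P) {m d V δ : ℝ} (hd : 0 < d) (hδ : 0 ≤ δ)
    (hmean : ∀ i, P[Z i] = m) (hdiag : ∀ i, cov[Z i, Z i; P] ≤ V)
    (hoff : ∀ i j, i ≠ j → cov[Z i, Z j; P] ≤ δ) :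
    P {ω | ∀ i, Z i ω ≤ m - d} ≤ ENNReal.ofReal ((V / Fintype.card ι + δ) / d ^ 2) := by
  classical
  set n : ℝ := (Fintype.card ι : ℝ)
  have hn : 0 < n := Nat.cast_pos.2 Fintype.card_pos
  set S : Ω → ℝ := fun ω ↦ ∑ i, Z i ω
  have hS : MemLp S 2 P := memLp_finsetSum _ fun i _ ↦ hZ i
  have hSmean : P[S] = n * m := by
    simp [S, integral_finsetSum _ fun i _ ↦ (hZ i).integrable one_le_two, hmean, n]
  have hcov_le (i j : ι) : cov[Z i, Z j; P] ≤ (if i = j then V else 0) + δ := by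
    split_ifs with h
    · subst h; linarith [hdiag i]
    · linarith [hoff i j h]
  have hvar : variance S P ≤ n * (V + n * δ) := by
    rw [variance_fun_sum hZ]
    calc ∑ i, ∑ j, cov[Z i, Z j; P] ≤ ∑ i : ι, ∑ j, ((if i = j then V else 0) + δ) := by
          gcongr with i _ j _; exact hcov_le i j
      _ = n * (V + n * δ) := by simp [Finset.sum_add_distrib, n]; ring
  have hsub : {ω | ∀ i, Z i ω ≤ m - d} ⊆ {ω | n * d ≤ |S ω - P[S]|} := by
    intro ω hω
    have : S ω ≤ n * (m - d) := by
      simpa [S, n, mul_sub] using Finset.sum_le_sum fun i (_ : i ∈ Finset.univ) ↦ hω i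
    rw [mem_ofPred_eq, hSmean, abs_sub_comm]
    exact le_abs.2 (.inl (by linarith))
  have hbound : variance S P / (n * d) ^ 2 ≤ (V / n + δ) / d ^ 2 := by
    calc variance S P / (n * d) ^ 2 ≤ n * (V + n * δ) / (n * d) ^ 2 := by gcongr
      _ = (V / n + δ) / d ^ 2 := by field_simp
  calc P {ω | ∀ i, Z i ω ≤ m - d}
      ≤ ENNReal.ofReal (variance S P / (n * d) ^ 2) :=
        (measure_mono hsub).trans (meas_ge_le_variance_div_sq hS (mul_pos hn hd))
    _ ≤ ENNReal.ofReal ((V / n + δ) / d ^ 2) := ENNReal.ofReal_le_ofReal hbound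

namespace IsFractionalBrownianMotion

variable {Ω : Type*} [MeasurableSpace Ω] {P : Measure Ω} {H : ℝ} {B : ℝ → Ω → ℝ}

lemma map_mul_add_mul (hB : IsFractionalBrownianMotion P H B) (hH : H ≠ 0) {s t : ℝ}
    (hs : 0 ≤ s) (ht : 0 ≤ t) (a b : ℝ) :
    P.map (fun ω ↦ a * B s ω + b * B t ω) = gaussianReal 0
      (a ^ 2 * s ^ (2 * H) + 2 * a * b * fbmCov H s t + b ^ 2 * t ^ (2 * H)).toNNReal := by
  convert hB.gaussian 2 ![s, t] ![a, b] (by simp [Fin.forall_fin_two, hs, ht]) using 3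
  · simp [Fin.sum_univ_two]
  · simp [Fin.sum_univ_two, fbmCov_self hH, fbmCov_comm H t s]; ring

lemma map_mul (hB : IsFractionalBrownianMotion P H B) (hH : H ≠ 0) {t : ℝ} (ht : 0 ≤ t)
    (a : ℝ) : P.map (fun ω ↦ a * B t ω) = gaussianReal 0 (a ^ 2 * t ^ (2 * H)).toNNReal := by
  convert hB.gaussian 1 ![t] ![a] (by simp [ht]) using 3
  · simp
  · simp [fbmCov_self hH, sq]

lemma map_two_div_rpow_mul (hB : IsFractionalBrownianMotion P H B) (hH : H ≠ 0) {t : ℝ}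
    (ht : 0 < t) : P.map (fun ω ↦ 2 / t ^ H * B t ω) = gaussianReal 0 4 := by
  rw [hB.map_mul hH ht.le, sq_two_div_rpow_mul_rpow_two_mul ht]
  norm_num

lemma integral_exp_two_div_rpow_mul [IsProbabilityMeasure P]
    (hB : IsFractionalBrownianMotion P H B) (hH : H ≠ 0) {t : ℝ} (ht : 0 < t) :
    P[fun ω ↦ exp (2 / t ^ H * B t ω)] = exp 2 := by
  rw [integral_exp_of_map_eq_gaussianReal (hB.map_two_div_rpow_mul hH ht)]
  norm_num

lemma covariance_exp_two_div_rpow_mul [IsProbabilityMeasure P]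
    (hB : IsFractionalBrownianMotion P H B) (hH : 0 < H) {s t : ℝ} (hs : 0 < s) (ht : 0 < t) :
    cov[fun ω ↦ exp (2 / s ^ H * B s ω), fun ω ↦ exp (2 / t ^ H * B t ω); P] =
      exp 4 * (exp (4 * (fbmCov H s t / (s ^ H * t ^ H))) - 1) := by
  set r := fbmCov H s t / (s ^ H * t ^ H)
  have hr : 0 ≤ r := div_nonneg (fbmCov_nonneg hH.le hs.le ht.le) (by positivity)
  have hsum : P.map (fun ω ↦ 2 / s ^ H * B s ω + 2 / t ^ H * B t ω) =
      gaussianReal 0 (8 + 8 * r).toNNReal := by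
    rw [hB.map_mul_add_mul hH.ne' hs.le ht.le, sq_two_div_rpow_mul_rpow_two_mul hs,
      sq_two_div_rpow_mul_rpow_two_mul ht]
    congr 2
    simp only [r]
    field_simp
    ring
  rw [covariance_exp_of_map_eq_gaussianReal (hB.map_two_div_rpow_mul hH.ne' hs)
    (hB.map_two_div_rpow_mul hH.ne' ht) hsum, Real.coe_toNNReal _ (by positivity),
    mul_sub, ← exp_add]
  norm_num [add_div]
  ring

lemma covariance_exp_two_div_rpow_mul_self [IsProbabilityMeasure P]
    (hB : IsFractionalBrownianMotion P H B) (hH : 0 < H) {t : ℝ} (ht : 0 < t) :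
    cov[fun ω ↦ exp (2 / t ^ H * B t ω), fun ω ↦ exp (2 / t ^ H * B t ω); P] =
      exp 8 - exp 4 := by
  have hσ : t ^ (2 * H) = t ^ H * t ^ H := by rw [mul_comm, rpow_mul ht.le, rpow_two, sq]
  have hσpos : 0 < t ^ H * t ^ H := by positivity
  rw [hB.covariance_exp_two_div_rpow_mul hH ht ht, fbmCov_self hH.ne', hσ, div_self hσpos.ne',
    mul_one, mul_sub, ← exp_add]
  norm_num

lemma measure_forall_ge_le_le [IsProbabilityMeasure P] (hB : IsFractionalBrownianMotion P H B)
    (hH0 : 0 < H) (hH1 : H < 1) (T M : ℝ) {n : ℕ} (hn : 0 < n) {ε : ℝ} (hε : 0 < ε) :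
    P {ω | ∀ t, T ≤ t → B t ω ≤ M} ≤
      ENNReal.ofReal ((exp 8 / n + exp 4 * (exp (4 * ε) - 1)) / (exp 2 - exp 1) ^ 2) := by
  obtain ⟨T₀, hT₀M, hT₀T⟩ := (((tendsto_rpow_atTop hH0).eventually_ge_atTop (2 * M)).and
    (eventually_ge_atTop (max T 1))).exists
  have hT₀ : 0 < T₀ := one_pos.trans_le ((le_max_right _ _).trans hT₀T)
  obtain ⟨t, hTt, ht⟩ := exists_fin_fbmCov_le hH0 hH1 hε hT₀ n
  have htpos (k : Fin n) : 0 < t k := hT₀.trans_le (hTt k)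
  have : Nonempty (Fin n) := ⟨⟨0, hn⟩⟩
  set Z : Fin n → Ω → ℝ := fun k ω ↦ exp (2 / t k ^ H * B (t k) ω)
  have hsub : {ω | ∀ s, T ≤ s → B s ω ≤ M} ⊆
      {ω | ∀ k, Z k ω ≤ exp 2 - (exp 2 - exp 1)} := by
    intro ω hω k
    have hσ : 2 * M ≤ t k ^ H := hT₀M.trans (by gcongr; exact hTt k)
    have hBk : B (t k) ω ≤ M := hω _ (((le_max_left _ _).trans hT₀T).trans (hTt k))
    have : 2 / t k ^ H * B (t k) ω ≤ 1 := by
      rw [div_mul_eq_mul_div, div_le_one (by have := htpos k; positivity)]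
      linarith
    simpa [Z] using this
  have hd : 0 < exp 2 - exp 1 := sub_pos.2 (exp_lt_exp.2 one_lt_two)
  have hδ : 0 ≤ exp 4 * (exp (4 * ε) - 1) := by
    have := one_le_exp (by positivity : 0 ≤ 4 * ε); nlinarith [exp_pos 4]
  have hbound := measure_forall_le_sub_le (Z := Z) (V := exp 8)
    (fun k ↦ memLp_exp_of_map_eq_gaussianReal (hB.map_two_div_rpow_mul hH0.ne' (htpos k))) hd hδ
    (fun k ↦ hB.integral_exp_two_div_rpow_mul hH0.ne' (htpos k)) (fun k ↦ ?_)
    (fun j k hjk ↦ ?_)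
  · rw [Fintype.card_fin] at hbound
    exact (measure_mono hsub).trans hbound
  · exact (hB.covariance_exp_two_div_rpow_mul_self hH0 (htpos k)).trans_le
      (sub_le_self _ (exp_pos 4).le)
  · rw [hB.covariance_exp_two_div_rpow_mul hH0 (htpos j) (htpos k)]
    have : 0 < t j ^ H * t k ^ H := by have := htpos j; have := htpos k; positivity
    gcongr
    exact (div_le_iff₀ this).2 (ht j k hjk)

lemma measure_forall_ge_le_eq_zero [IsProbabilityMeasure P]
    (hB : IsFractionalBrownianMotion P H B) (hH : H ∈ Ioo (0 : ℝ) 1) (T M : ℝ) :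
    P {ω | ∀ t, T ≤ t → B t ω ≤ M} = 0 := by
  set F : ℝ → ℝ := fun x ↦ (exp 8 * x + exp 4 * (exp (4 * x) - 1)) / (exp 2 - exp 1) ^ 2
  have hF : Tendsto (fun n : ℕ ↦ ENNReal.ofReal (F (1 / n))) atTop (𝓝 0) := by
    have hcont : Continuous fun x ↦ ENNReal.ofReal (F x) :=
      ENNReal.continuous_ofReal.comp (by fun_prop)
    simpa [F, Function.comp_def] using (hcont.tendsto 0).comp tendsto_one_div_atTop_nhds_zero_nat
  refine nonpos_iff_eq_zero.1 (ge_of_tendsto hF ((eventually_gt_atTop 0).mono fun n hn ↦ ?_))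
  simpa only [F, mul_one_div] using
    hB.measure_forall_ge_le_le hH.1 hH.2 T M hn (ε := 1 / n) (by positivity)

lemma ae_frequently_lt [IsProbabilityMeasure P] (hB : IsFractionalBrownianMotion P H B)
    (hH : H ∈ Ioo (0 : ℝ) 1) : ∀ᵐ ω ∂P, ∀ M : ℝ, ∃ᶠ t in atTop, M < B t ω := by
  have h (M T : ℕ) : ∀ᵐ ω ∂P, ∃ t, (T : ℝ) ≤ t ∧ (M : ℝ) < B t ω := by
    simpa [ae_iff] using hB.measure_forall_ge_le_eq_zero hH T M
  filter_upwards [ae_all_iff.2 fun M ↦ ae_all_iff.2 (h M)] with ω hω M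
  refine frequently_atTop.2 fun T ↦ ?_
  obtain ⟨t, hTt, hMt⟩ := hω ⌈M⌉₊ ⌈T⌉₊
  exact ⟨t, (Nat.le_ceil T).trans hTt, (Nat.le_ceil M).trans_lt hMt⟩

end IsFractionalBrownianMotion

lemma integral_mul_exp_neg_mul (a τ : ℝ) :
    ∫ s in (0 : ℝ)..τ, a * exp (-(a * s)) = 1 - exp (-(a * τ)) := by
  have hderiv (s : ℝ) : HasDerivAt (fun s ↦ -exp (-(a * s))) (a * exp (-(a * s))) s := by
    simpa [mul_comm] using (((hasDerivAt_id s).const_mul a).neg.exp).fun_neg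
  rw [intervalIntegral.integral_eq_sub_of_hasDerivAt (fun s _ ↦ hderiv s)
    (by apply Continuous.intervalIntegrable; fun_prop)]
  simp
  ring

lemma le_fbmJ_of_isMaxOn {Ω : Type*} {B : ℝ → Ω → ℝ} {ω : Ω} {a τ : ℝ} (ha : a ≤ 0)
    (hτ : 0 ≤ τ) (hcont : ContinuousOn (fun t ↦ B t ω) (Icc 0 τ))
    (hmax : IsMaxOn (fun t ↦ B t ω) (Icc 0 τ) τ) : B τ ω ≤ fbmJ a B τ ω := by
  have hint : ∫ s in (0 : ℝ)..τ, exp (-(a * s)) * B s ω ≤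
      ∫ s in (0 : ℝ)..τ, exp (-(a * s)) * B τ ω := by
    refine intervalIntegral.integral_mono_on hτ ?_ ?_ fun s hs ↦ ?_
    · exact ContinuousOn.intervalIntegrable (by rw [uIcc_of_le hτ]; fun_prop)
    · exact Continuous.intervalIntegrable (by fun_prop) _ _
    · exact mul_le_mul_of_nonneg_left (hmax hs) (exp_pos _).le
  have hconst : a * ∫ s in (0 : ℝ)..τ, exp (-(a * s)) * B τ ω =
      (1 - exp (-(a * τ))) * B τ ω := by
    rw [← integral_mul_exp_neg_mul, ← intervalIntegral.integral_mul_const,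
      ← intervalIntegral.integral_const_mul]
    simp only [mul_assoc]
  have := mul_le_mul_of_nonpos_left hint ha
  rw [fbmJ]
  linarith

lemma frequently_isMaxOn_Icc_and_lt {f : ℝ → ℝ} (hf : ContinuousOn f (Ici 0))
    (hunb : ∀ M, ∃ᶠ t in atTop, M < f t) (M : ℝ) :
    ∃ᶠ τ in atTop, 0 ≤ τ ∧ IsMaxOn f (Icc 0 τ) τ ∧ M < f τ := by
  refine frequently_atTop.2 fun T ↦ ?_
  have hT : 0 ≤ max T 0 := le_max_right _ _
  obtain ⟨z, -, hz⟩ := isCompact_Icc.exists_isMaxOn (nonempty_Icc.2 hT)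
    (hf.mono Icc_subset_Ici_self)
  obtain ⟨u, hu, hTu⟩ :=
    ((hunb (max M (f z))).and_eventually (eventually_ge_atTop (max T 0))).exists
  have hu0 : 0 ≤ u := hT.trans hTu
  obtain ⟨τ, hτ, hτmax⟩ := isCompact_Icc.exists_isMaxOn (nonempty_Icc.2 hu0)
    (hf.mono Icc_subset_Ici_self)
  have hfτ : max M (f z) < f τ := hu.trans_le (hτmax ⟨hu0, le_rfl⟩)
  have hTτ : max T 0 < τ := by
    by_contra! hτT
    exact (hz ⟨hτ.1, hτT⟩).not_gt ((le_max_right _ _).trans_lt hfτ)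
  exact ⟨τ, (le_max_left _ _).trans hTτ.le, hτ.1,
    hτmax.on_subset (Icc_subset_Icc_right hτ.2), (le_max_left _ _).trans_lt hfτ⟩

lemma limsup_coe_eq_top_of_forall_frequently_lt {α : Type*} {l : Filter α} {f : α → ℝ}
    (hf : ∀ M, ∃ᶠ x in l, M < f x) : limsup (fun x ↦ (f x : EReal)) l = ⊤ := by
  refine EReal.eq_top_iff_forall_lt _ |>.2 fun M ↦ ?_
  calc (M : EReal) < (M + 1 : ℝ) := by exact_mod_cast lt_add_one M
    _ ≤ limsup (fun x ↦ (f x : EReal)) l :=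
      le_limsup_of_frequently_le' ((hf (M + 1)).mono fun x hx ↦ by exact_mod_cast hx.le)

/-- If `B^H` is a fractional Brownian motion with Hurst parameter `H ∈ (0,1)` and `a < 0`,
and `J_t = e^{−at} B^H_t + a ∫₀ᵗ e^{−as} B^H_s ds`, then almost surely
`limsup_{t→∞} J_t = +∞`. -/
theorem limsup_fbmJ_eq_top_of_neg_drift
    {Ω : Type*} [MeasurableSpace Ω] (P : Measure Ω) [IsProbabilityMeasure P]
    (H : ℝ) (hH : H ∈ Set.Ioo (0:ℝ) 1)
    (B : ℝ → Ω → ℝ) (hB : IsFractionalBrownianMotion P H B)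
    (a : ℝ) (ha : a < 0) :
    P {ω | Filter.limsup (fun t => ((fbmJ a B t ω : ℝ) : EReal)) Filter.atTop = ⊤} = 1 := by
  have hae : ∀ᵐ ω ∂P, limsup (fun t ↦ (fbmJ a B t ω : EReal)) atTop = ⊤ := by
    filter_upwards [hB.cont, hB.ae_frequently_lt hH] with ω hcont hunb
    refine limsup_coe_eq_top_of_forall_frequently_lt fun M ↦ ?_
    refine (frequently_isMaxOn_Icc_and_lt hcont hunb M).mono fun τ ⟨hτ, hmax, hM⟩ ↦ ?_
    exact hM.trans_le (le_fbmJ_of_isMaxOn ha.le hτ (hcont.mono Icc_subset_Ici_self) hmax)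
  rw [← measure_univ (μ := P)]
  exact measure_congr (ae_eq_univ.2 hae)
end

section
/- Let H ∈ (0,1), let B^H be a fractional Brownian motion with Hurst parameter H on a probability space (Ω, F, P), let a > 0, and set J_t := e^{−at} B^H_t + a ∫₀ᵗ e^{−as} B^H_s ds (a pathwise integral, defined using the almost sure continuity of the sample paths). Then P( sup_{t≥0} J_t < ∞ ) = 1. -/
open MeasureTheory ProbabilityTheory Filter Set

/-!
Chaining the Gaussian tail bound `P(|B_t - B_s| ≥ x) ≤ 2 exp(-x² / 2|t - s|^{2H})` along the
dyadic grid of `[0, N]`, with thresholds `λ (k + 1) 2^{-kH}` at level `k`, bounds `|B|` on `[0, N]`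
by `λ (N + Σ_k (k + 1) 2^{-kH})` outside an event of probability `O(N e^{-λ²/2})`. For
`λ = 2 e^{εN/2}` these probabilities are summable in `N`, so by Borel–Cantelli almost surely
`|B_s| ≤ C e^{εs}` for all `s ≥ 0`. With `ε = a/2`, both `e^{-at} B_t` and `a ∫₀ᵗ e^{-as} B_s ds`
are then bounded uniformly in `t`.
-/

open scoped NNReal ENNReal Topology

lemma ProbabilityTheory.hasSubgaussianMGF_of_map_eq_gaussianReal {Ω : Type*} [MeasurableSpace Ω]
    {P : Measure Ω} {X : Ω → ℝ} {v : ℝ≥0} (hX : P.map X = gaussianReal 0 v) :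
    HasSubgaussianMGF X v P where
  integrable_exp_mul t := .of_integral_ne_zero <| by
    rw [← mgf, mgf_gaussianReal hX]
    exact (Real.exp_pos _).ne'
  mgf_le t := by simp [mgf_gaussianReal hX]

lemma ProbabilityTheory.HasSubgaussianMGF.measure_abs_ge_le {Ω : Type*} [MeasurableSpace Ω]
    {P : Measure Ω} [IsFiniteMeasure P] {X : Ω → ℝ} {c : ℝ≥0} (h : HasSubgaussianMGF X c P)
    {ε : ℝ} (hε : 0 ≤ ε) :
    P {ω | ε ≤ |X ω|} ≤ ENNReal.ofReal (2 * Real.exp (-ε ^ 2 / (2 * c))) := by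
  have tail : ∀ Y : Ω → ℝ, HasSubgaussianMGF Y c P →
      P {ω | ε ≤ Y ω} ≤ ENNReal.ofReal (Real.exp (-ε ^ 2 / (2 * c))) := fun Y hY => by
    rw [← ofReal_measureReal]
    exact ENNReal.ofReal_le_ofReal (hY.measure_ge_le hε)
  calc P {ω | ε ≤ |X ω|} ≤ P ({ω | ε ≤ X ω} ∪ {ω | ε ≤ (-X) ω}) :=
        measure_mono fun ω (hω : ε ≤ |X ω|) => by
          rcases le_abs'.mp hω with hneg | hpos
          · exact Or.inr (show ε ≤ -X ω by linarith)
          · exact Or.inl hpos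
    _ ≤ P {ω | ε ≤ X ω} + P {ω | ε ≤ (-X) ω} := measure_union_le _ _
    _ ≤ ENNReal.ofReal (Real.exp (-ε ^ 2 / (2 * c))) +
          ENNReal.ofReal (Real.exp (-ε ^ 2 / (2 * c))) :=
        add_le_add (tail X h) (tail _ h.neg)
    _ = ENNReal.ofReal (2 * Real.exp (-ε ^ 2 / (2 * c))) := by
        rw [← ENNReal.ofReal_add (by positivity) (by positivity), ← two_mul]

noncomputable def dyadicFloor (k : ℕ) (t : ℝ) : ℝ := ⌊t * 2 ^ k⌋₊ / 2 ^ k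

lemma dyadicFloor_nonneg (k : ℕ) (t : ℝ) : 0 ≤ dyadicFloor k t := by
  unfold dyadicFloor; positivity

lemma dyadicFloor_le {t : ℝ} (ht : 0 ≤ t) (k : ℕ) : dyadicFloor k t ≤ t := by
  rw [dyadicFloor, div_le_iff₀ (by positivity)]
  exact Nat.floor_le (by positivity)

lemma sub_inv_two_pow_lt_dyadicFloor (k : ℕ) (t : ℝ) : t - (2 ^ k)⁻¹ < dyadicFloor k t := by
  rw [dyadicFloor, lt_div_iff₀ (by positivity), sub_mul, inv_mul_cancel₀ (by positivity)]
  linarith [Nat.lt_floor_add_one (t * 2 ^ k)]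

lemma tendsto_dyadicFloor {t : ℝ} (ht : 0 ≤ t) : Tendsto (dyadicFloor · t) atTop (𝓝 t) := by
  have hlow : Tendsto (fun k : ℕ => t - (2 ^ k)⁻¹) atTop (𝓝 t) := by
    simpa using tendsto_const_nhds.sub
      (tendsto_inv_atTop_zero.comp (tendsto_pow_atTop_atTop_of_one_lt (one_lt_two (α := ℝ))))
  exact tendsto_of_tendsto_of_tendsto_of_le_of_le hlow tendsto_const_nhds
    (fun k => (sub_inv_two_pow_lt_dyadicFloor k t).le) (dyadicFloor_le ht)

lemma dyadicFloor_succ_eq_or {t : ℝ} (ht : 0 ≤ t) (k : ℕ) :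
    dyadicFloor (k + 1) t = dyadicFloor k t ∨
      ∃ j : ℕ, dyadicFloor k t = j / 2 ^ (k + 1) ∧
        dyadicFloor (k + 1) t = (j + 1) / 2 ^ (k + 1) := by
  set n := ⌊t * 2 ^ k⌋₊
  have hlow : 2 * n ≤ ⌊t * 2 ^ (k + 1)⌋₊ := Nat.le_floor <| by
    push_cast [pow_succ]
    nlinarith [Nat.floor_le (by positivity : 0 ≤ t * 2 ^ k)]
  have hup : ⌊t * 2 ^ (k + 1)⌋₊ < 2 * n + 2 := (Nat.floor_lt (by positivity)).mpr <| by
    push_cast [pow_succ]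
    nlinarith [Nat.lt_floor_add_one (t * 2 ^ k)]
  have hk : dyadicFloor k t = (2 * n : ℕ) / 2 ^ (k + 1) := by
    rw [dyadicFloor, pow_succ]; push_cast; field_simp; rfl
  rcases (show ⌊t * 2 ^ (k + 1)⌋₊ = 2 * n ∨ ⌊t * 2 ^ (k + 1)⌋₊ = 2 * n + 1 by omega) with h | h
  · left; rw [hk, dyadicFloor, h]
  · right; exact ⟨2 * n, hk, by rw [dyadicFloor, h]; push_cast; ring⟩

lemma abs_le_of_unit_increments_le {f : ℝ → ℝ} (hf0 : f 0 = 0) {n : ℕ} {c : ℝ}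
    (hinc : ∀ m < n, |f (m + 1) - f m| ≤ c) : |f n| ≤ n * c :=
  calc |f n| = dist (f ((0 : ℕ) : ℝ)) (f (n : ℝ)) := by simp [hf0, Real.dist_eq]
    _ ≤ ∑ m ∈ Finset.range n, dist (f (m : ℝ)) (f ((m + 1 : ℕ) : ℝ)) :=
        dist_le_range_sum_dist (fun m : ℕ => f m) n
    _ ≤ ∑ m ∈ Finset.range n, c := Finset.sum_le_sum fun m hm => by
        simpa [Real.dist_eq, abs_sub_comm] using hinc m (Finset.mem_range.mp hm)
    _ = n * c := by simp

lemma abs_le_of_dyadic_increments_le {f : ℝ → ℝ} (hf : ContinuousOn f (Ici 0)) (hf0 : f 0 = 0)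
    {N : ℕ} {c : ℕ → ℝ} (hc : ∀ k, 0 ≤ c k) (hsum : Summable c)
    (hinc : ∀ k j : ℕ, j < N * 2 ^ k → |f ((j + 1) / 2 ^ k) - f (j / 2 ^ k)| ≤ c k)
    {t : ℝ} (ht : t ∈ Icc 0 (N : ℝ)) : |f t| ≤ N * c 0 + ∑' k, c k := by
  set u : ℕ → ℝ := (dyadicFloor · t)
  have hfloor : ⌊t⌋₊ ≤ N := Nat.floor_le_of_le ht.2
  have hstart : |f (u 0)| ≤ N * c 0 := by
    have h := abs_le_of_unit_increments_le hf0 (n := ⌊t⌋₊) (c := c 0) fun m hm => by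
      simpa using hinc 0 m (by simpa using hm.trans_le hfloor)
    have hu0 : u 0 = ⌊t⌋₊ := by simp [u, dyadicFloor]
    rw [hu0]
    exact h.trans (mul_le_mul_of_nonneg_right (by exact_mod_cast hfloor) (hc 0))
  have hstep : ∀ k, dist (f (u k)) (f (u (k + 1))) ≤ c (k + 1) := by
    intro k
    rw [dist_comm, Real.dist_eq]
    rcases dyadicFloor_succ_eq_or ht.1 k with h | ⟨j, hj, hj'⟩
    · simp [u, h, hc]
    · have hjN : j < N * 2 ^ (k + 1) := by
        have : ((j : ℝ) + 1) / 2 ^ (k + 1) ≤ N := hj' ▸ (dyadicFloor_le ht.1 _).trans ht.2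
        rw [div_le_iff₀ (by positivity)] at this
        exact_mod_cast (by linarith : (j : ℝ) < N * 2 ^ (k + 1))
      simpa only [u, hj, hj'] using hinc (k + 1) j hjN
  have hchain : ∀ K, |f (u K)| ≤ N * c 0 + ∑' k, c k := by
    intro K
    calc |f (u K)| ≤ |f (u 0)| + |f (u K) - f (u 0)| := by
          linarith [abs_sub_abs_le_abs_sub (f (u K)) (f (u 0))]
      _ ≤ N * c 0 + ∑ k ∈ Finset.range K, c (k + 1) := by
          gcongr
          rw [abs_sub_comm, ← Real.dist_eq]
          exact (dist_le_range_sum_dist (fun k => f (u k)) K).trans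
            (Finset.sum_le_sum fun k _ => hstep k)
      _ ≤ N * c 0 + ∑ k ∈ Finset.range (K + 1), c k := by
          rw [Finset.sum_range_succ']; linarith [hc 0]
      _ ≤ N * c 0 + ∑' k, c k := by gcongr; exact hsum.sum_le_tsum _ fun k _ => hc k
  have hlim : Tendsto (fun K => f (u K)) atTop (𝓝 (f t)) :=
    (hf t ht.1).tendsto.comp <| tendsto_nhdsWithin_of_tendsto_nhds_of_eventually_within _
      (tendsto_dyadicFloor ht.1) (.of_forall fun k => dyadicFloor_nonneg k t)
  exact le_of_tendsto hlim.abs (.of_forall hchain)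

lemma exists_abs_le_mul_exp_of_eventually {f : ℝ → ℝ} {C₀ ε : ℝ} (hC₀ : 0 ≤ C₀) (hε : 0 ≤ ε)
    (h : ∀ᶠ N : ℕ in atTop, ∀ s ∈ Icc (0 : ℝ) N, |f s| ≤ C₀ * Real.exp (ε * N)) :
    ∃ C, ∀ s, 0 ≤ s → |f s| ≤ C * Real.exp (ε * s) := by
  obtain ⟨N₀, hN₀⟩ := eventually_atTop.mp h
  refine ⟨C₀ * Real.exp (ε * (N₀ + 1)), fun s hs => ?_⟩
  have hceil : (⌈s⌉₊ : ℝ) < s + 1 := Nat.ceil_lt_add_one hs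
  calc |f s| ≤ C₀ * Real.exp (ε * (N₀ + ⌈s⌉₊ : ℕ)) :=
        hN₀ _ (Nat.le_add_right _ _) s ⟨hs, by push_cast; linarith [Nat.le_ceil s]⟩
    _ ≤ C₀ * Real.exp (ε * (N₀ + 1)) * Real.exp (ε * s) := by
        rw [mul_assoc, ← Real.exp_add]
        gcongr
        push_cast
        nlinarith

def dyadicIncrementExceeds {Ω : Type*} (B : ℝ → Ω → ℝ) (c : ℕ → ℝ) (N : ℕ) : Set Ω :=
  ⋃ k, ⋃ j ∈ Finset.range (N * 2 ^ k), {ω | c k ≤ |B ((j + 1) / 2 ^ k) ω - B (j / 2 ^ k) ω|}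

noncomputable def dyadicThreshold (H L : ℝ) (k : ℕ) : ℝ := L * ((k + 1) * ((2 : ℝ) ^ (-H)) ^ k)

lemma abs_dyadic_step_rpow (H : ℝ) (j k : ℕ) :
    |((j : ℝ) + 1) / 2 ^ k - j / 2 ^ k| ^ (2 * H) = (((2 : ℝ) ^ (-H)) ^ k) ^ 2 := by
  rw [div_sub_div_same, add_sub_cancel_left, abs_of_pos (by positivity), one_div,
    Real.inv_rpow (by positivity), ← Real.rpow_natCast 2 k, ← Real.rpow_mul (by norm_num),
    ← Real.rpow_neg (by norm_num), ← pow_mul, ← Real.rpow_mul_natCast (by norm_num)]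
  congr 1; push_cast; ring

lemma two_mul_exp_half_mul_add_le {ε K x : ℝ} (hε : 0 < ε) (hK : 0 ≤ K) (hx : 0 ≤ x) :
    2 * Real.exp (ε * x / 2) * (x + K) ≤ 2 * (2 / ε + K) * Real.exp (ε * x) := by
  have hx_le : x ≤ 2 / ε * Real.exp (ε * x / 2) := by
    rw [div_mul_eq_mul_div, le_div_iff₀ hε]
    linarith [Real.add_one_le_exp (ε * x / 2)]
  have hK_le : K ≤ K * Real.exp (ε * x / 2) :=
    le_mul_of_one_le_right hK (Real.one_le_exp (by positivity))
  calc 2 * Real.exp (ε * x / 2) * (x + K)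
      ≤ 2 * Real.exp (ε * x / 2) * ((2 / ε + K) * Real.exp (ε * x / 2)) := by gcongr; linarith
    _ = 2 * (2 / ε + K) * Real.exp (ε * x) := by
        rw [show ε * x = ε * x / 2 + ε * x / 2 by ring, Real.exp_add]
        ring_nf

lemma exp_neg_sq_mul_le {L : ℝ} (hL : 2 ≤ L) (k : ℕ) :
    Real.exp (-(L * (k + 1)) ^ 2 / 2) ≤ Real.exp (-L ^ 2 / 2) * Real.exp (-2) ^ k := by
  rw [← Real.exp_nat_mul, ← Real.exp_add, Real.exp_le_exp]
  have hk : (0 : ℝ) ≤ k := k.cast_nonneg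
  nlinarith [mul_nonneg (mul_nonneg hk hk) (by nlinarith : (0 : ℝ) ≤ L ^ 2),
    mul_nonneg hk (by nlinarith : (0 : ℝ) ≤ L ^ 2 - 4)]

lemma two_mul_exp_neg_two_lt_one : 2 * Real.exp (-2) < 1 := by
  rw [Real.exp_neg, ← div_eq_mul_inv, div_lt_one (Real.exp_pos 2)]
  linarith [Real.add_one_le_exp 2]

namespace IsFractionalBrownianMotion

variable {Ω : Type*} [MeasurableSpace Ω] {P : Measure Ω} {H : ℝ} {B : ℝ → Ω → ℝ}

lemma map_sub (hB : IsFractionalBrownianMotion P H B) (hH : 0 < H) {t s : ℝ} (ht : 0 ≤ t)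
    (hs : 0 ≤ s) :
    P.map (fun ω => B t ω - B s ω) = gaussianReal 0 (|t - s| ^ (2 * H)).toNNReal := by
  have h := hB.gaussian 2 ![t, s] ![1, -1] (by simp [Fin.forall_fin_two, ht, hs])
  have hzero : (0:ℝ) ^ (2 * H) = 0 := Real.zero_rpow (by positivity)
  simp only [Fin.sum_univ_two, fbmCov, Matrix.cons_val_zero, Matrix.cons_val_one,
    sub_self, abs_zero, hzero, abs_sub_comm s t] at h
  convert h using 3 <;> ring

lemma measure_abs_sub_ge_le [IsFiniteMeasure P] (hB : IsFractionalBrownianMotion P H B)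
    (hH : 0 < H) {t s : ℝ} (ht : 0 ≤ t) (hs : 0 ≤ s) {ε : ℝ} (hε : 0 ≤ ε) :
    P {ω | ε ≤ |B t ω - B s ω|} ≤
      ENNReal.ofReal (2 * Real.exp (-ε ^ 2 / (2 * |t - s| ^ (2 * H)))) := by
  have h := (hasSubgaussianMGF_of_map_eq_gaussianReal (hB.map_sub hH ht hs)).measure_abs_ge_le hε
  rwa [Real.coe_toNNReal _ (by positivity)] at h

lemma measure_dyadicIncrementExceeds_le [IsFiniteMeasure P]
    (hB : IsFractionalBrownianMotion P H B) (hH : 0 < H) {L : ℝ} (hL : 2 ≤ L) (N : ℕ) :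
    P (dyadicIncrementExceeds B (dyadicThreshold H L) N) ≤
      ENNReal.ofReal (2 * N * Real.exp (-L ^ 2 / 2)) *
        ∑' k : ℕ, ENNReal.ofReal (2 * Real.exp (-2)) ^ k := by
  rw [← ENNReal.tsum_mul_left]
  refine (measure_iUnion_le _).trans (ENNReal.tsum_le_tsum fun k => ?_)
  have hincrement : ∀ j : ℕ, P {ω | dyadicThreshold H L k ≤
      |B ((j + 1) / 2 ^ k) ω - B (j / 2 ^ k) ω|} ≤
        ENNReal.ofReal (2 * Real.exp (-L ^ 2 / 2) * Real.exp (-2) ^ k) := fun j => by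
    refine (hB.measure_abs_sub_ge_le hH (by positivity) (by positivity)
      (by unfold dyadicThreshold; positivity)).trans (ENNReal.ofReal_le_ofReal ?_)
    have hr : ((2 : ℝ) ^ (-H)) ^ k ≠ 0 := by positivity
    rw [abs_dyadic_step_rpow, dyadicThreshold, mul_assoc 2,
      show -(L * ((k + 1) * ((2 : ℝ) ^ (-H)) ^ k)) ^ 2 / (2 * (((2 : ℝ) ^ (-H)) ^ k) ^ 2) =
        -(L * (k + 1)) ^ 2 / 2 by field_simp]
    exact mul_le_mul_of_nonneg_left (exp_neg_sq_mul_le hL k) zero_le_two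
  calc _ ≤ ∑ j ∈ Finset.range (N * 2 ^ k), P {ω | dyadicThreshold H L k ≤
          |B ((j + 1) / 2 ^ k) ω - B (j / 2 ^ k) ω|} := measure_biUnion_finset_le _ _
    _ ≤ ∑ j ∈ Finset.range (N * 2 ^ k),
          ENNReal.ofReal (2 * Real.exp (-L ^ 2 / 2) * Real.exp (-2) ^ k) :=
        Finset.sum_le_sum fun j _ => hincrement j
    _ = _ := by
        rw [Finset.sum_const, Finset.card_range, nsmul_eq_mul, ← ENNReal.ofReal_pow (by positivity),
          ← ENNReal.ofReal_natCast, ← ENNReal.ofReal_mul (by positivity),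
          ← ENNReal.ofReal_mul (by positivity)]
        congr 1; push_cast; ring

lemma ae_eventually_notMem_dyadicIncrementExceeds [IsFiniteMeasure P]
    (hB : IsFractionalBrownianMotion P H B) (hH : 0 < H) {ε : ℝ} (hε : 0 < ε) :
    ∀ᵐ ω ∂P, ∀ᶠ N : ℕ in atTop,
      ω ∉ dyadicIncrementExceeds B (dyadicThreshold H (2 * Real.exp (ε * N / 2))) N := by
  refine ae_eventually_notMem (LT.lt.ne ?_)
  have hQ : ∑' k : ℕ, ENNReal.ofReal (2 * Real.exp (-2)) ^ k < ∞ := by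
    rw [ENNReal.tsum_geometric, ENNReal.inv_lt_top, tsub_pos_iff_lt]
    exact ENNReal.ofReal_lt_one.mpr two_mul_exp_neg_two_lt_one
  set Q := ∑' k : ℕ, ENNReal.ofReal (2 * Real.exp (-2)) ^ k
  set g : ℕ → ℝ := fun N => 2 * ((N : ℝ) ^ 1 * Real.exp (-ε) ^ N)
  have hterm : ∀ N : ℕ, 2 * N * Real.exp (-(2 * Real.exp (ε * N / 2)) ^ 2 / 2) ≤ g N := fun N => by
    have hsq : Real.exp (ε * N / 2) ^ 2 = Real.exp (ε * N) := by
      rw [← Real.exp_nat_mul]; ring_nf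
    simp only [g, pow_one]
    rw [← Real.exp_nat_mul, mul_assoc, mul_pow, hsq]
    gcongr
    linarith [Real.add_one_le_exp (ε * N), mul_nonneg hε.le N.cast_nonneg]
  have hr : ‖Real.exp (-ε)‖ < 1 := by
    rw [Real.norm_of_nonneg (Real.exp_pos _).le, Real.exp_lt_one_iff]; linarith
  have hsum : Summable g := (summable_pow_mul_geometric_of_norm_lt_one 1 hr).mul_left 2
  calc ∑' N : ℕ, P (dyadicIncrementExceeds B (dyadicThreshold H (2 * Real.exp (ε * N / 2))) N)
      ≤ ∑' N : ℕ, ENNReal.ofReal (g N) * Q := ENNReal.tsum_le_tsum fun N =>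
          (hB.measure_dyadicIncrementExceeds_le hH
            (le_mul_of_one_le_right zero_le_two (Real.one_le_exp (by positivity))) N).trans
          (mul_le_mul_left (ENNReal.ofReal_le_ofReal (hterm N)) _)
    _ = ENNReal.ofReal (∑' N, g N) * Q := by
        rw [ENNReal.tsum_mul_right, ENNReal.ofReal_tsum_of_nonneg (fun N => by positivity) hsum]
    _ < ∞ := ENNReal.mul_lt_top ENNReal.ofReal_lt_top hQ

lemma ae_exists_abs_le_mul_exp [IsFiniteMeasure P]
    (hB : IsFractionalBrownianMotion P H B) (hH : 0 < H) {ε : ℝ} (hε : 0 < ε) :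
    ∀ᵐ ω ∂P, ∃ C, ∀ s, 0 ≤ s → |B s ω| ≤ C * Real.exp (ε * s) := by
  have hr : ‖(2 : ℝ) ^ (-H)‖ < 1 := by
    rw [Real.norm_of_nonneg (by positivity)]
    exact Real.rpow_lt_one_of_one_lt_of_neg one_lt_two (neg_neg_of_pos hH)
  have hsum : Summable fun k : ℕ => ((k : ℝ) + 1) * ((2 : ℝ) ^ (-H)) ^ k := by
    simpa [add_mul, pow_one] using
      (summable_pow_mul_geometric_of_norm_lt_one 1 hr).add (summable_geometric_of_norm_lt_one hr)
  set K := ∑' k : ℕ, ((k : ℝ) + 1) * ((2 : ℝ) ^ (-H)) ^ k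
  have hK : 0 ≤ K := tsum_nonneg fun k => by positivity
  filter_upwards [hB.cont, hB.ae_eventually_notMem_dyadicIncrementExceeds hH hε]
    with ω hcont hsmall
  refine exists_abs_le_mul_exp_of_eventually (C₀ := 2 * (2 / ε + K)) (by positivity) hε.le ?_
  filter_upwards [hsmall] with N hN s hs
  set L := 2 * Real.exp (ε * N / 2)
  have hL : 0 ≤ L := by positivity
  have hinc : ∀ k j : ℕ, j < N * 2 ^ k →
      |B ((j + 1) / 2 ^ k) ω - B (j / 2 ^ k) ω| ≤ dyadicThreshold H L k := fun k j hj => by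
    simp only [dyadicIncrementExceeds, mem_iUnion, Finset.mem_range, mem_ofPred_eq, not_exists,
      not_le] at hN
    exact (hN k j hj).le
  have hchain := abs_le_of_dyadic_increments_le hcont (hB.init ω)
    (fun k => mul_nonneg hL (by positivity)) (hsum.mul_left L) hinc hs
  rw [tsum_mul_left] at hchain
  calc |B s ω| ≤ N * L + L * K := by simpa [dyadicThreshold] using hchain
    _ = 2 * Real.exp (ε * N / 2) * (N + K) := by ring
    _ ≤ 2 * (2 / ε + K) * Real.exp (ε * N) := two_mul_exp_half_mul_add_le hε hK N.cast_nonneg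

end IsFractionalBrownianMotion

lemma intervalIntegral_exp_neg_mul_le {c t : ℝ} (hc : 0 < c) (ht : 0 ≤ t) :
    ∫ s in (0 : ℝ)..t, Real.exp (-c * s) ≤ c⁻¹ := by
  rw [intervalIntegral.integral_of_le ht]
  calc ∫ s in Ioc 0 t, Real.exp (-c * s) ≤ ∫ s in Ioi 0, Real.exp (-c * s) :=
        setIntegral_mono_set (exp_neg_integrableOn_Ioi 0 hc)
          (.of_forall fun s => (Real.exp_pos _).le) Ioc_subset_Ioi_self.eventuallyLE
    _ = c⁻¹ := by rw [integral_exp_mul_Ioi (by linarith)]; simp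

lemma fbmJ_le_of_abs_le_mul_exp {Ω : Type*} {a b C : ℝ} (ha : 0 ≤ a) (hba : b < a)
    {B : ℝ → Ω → ℝ} {ω : Ω} (hcont : ContinuousOn (fun t => B t ω) (Ici 0))
    (hB : ∀ s, 0 ≤ s → |B s ω| ≤ C * Real.exp (b * s)) {t : ℝ} (ht : 0 ≤ t) :
    fbmJ a B t ω ≤ C + a * (C * (a - b)⁻¹) := by
  have hC : 0 ≤ C := by simpa using (abs_nonneg _).trans (hB 0 le_rfl)
  have hdamped : ∀ s, 0 ≤ s → Real.exp (-(a * s)) * B s ω ≤ C * Real.exp (-(a - b) * s) :=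
    fun s hs => calc
      _ ≤ Real.exp (-(a * s)) * (C * Real.exp (b * s)) :=
          mul_le_mul_of_nonneg_left ((le_abs_self _).trans (hB s hs)) (Real.exp_pos _).le
      _ = C * Real.exp (-(a - b) * s) := by rw [mul_left_comm, ← Real.exp_add]; ring_nf
  have hintegral : ∫ s in (0 : ℝ)..t, Real.exp (-(a * s)) * B s ω ≤ C * (a - b)⁻¹ :=
    calc _ ≤ ∫ s in (0 : ℝ)..t, C * Real.exp (-(a - b) * s) := by
          have hint : IntervalIntegrable (fun s => Real.exp (-(a * s)) * B s ω) volume 0 t :=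
            ((by fun_prop : Continuous fun s => Real.exp (-(a * s))).continuousOn.mul
              (hcont.mono Icc_subset_Ici_self)).intervalIntegrable_of_Icc ht
          exact intervalIntegral.integral_mono_on ht hint
            (Continuous.intervalIntegrable (by fun_prop) _ _) fun s hs => hdamped s hs.1
      _ ≤ C * (a - b)⁻¹ := by
          rw [intervalIntegral.integral_const_mul]
          exact mul_le_mul_of_nonneg_left (intervalIntegral_exp_neg_mul_le (by linarith) ht) hC
  have hfirst : Real.exp (-(a * t)) * B t ω ≤ C :=
    (hdamped t ht).trans (mul_le_of_le_one_right hC (Real.exp_le_one_iff.mpr (by nlinarith)))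
  unfold fbmJ
  gcongr

/-- If `B^H` is a fractional Brownian motion with Hurst parameter `H ∈ (0,1)` and `a > 0`,
and `J_t = e^{−at} B^H_t + a ∫₀ᵗ e^{−as} B^H_s ds`, then almost surely
`sup_{t ≥ 0} J_t < ∞`. -/
theorem sup_fbmJ_lt_top_of_pos_drift
    {Ω : Type*} [MeasurableSpace Ω] (P : Measure Ω) [IsProbabilityMeasure P]
    (H : ℝ) (hH : H ∈ Set.Ioo (0:ℝ) 1)
    (B : ℝ → Ω → ℝ) (hB : IsFractionalBrownianMotion P H B)
    (a : ℝ) (ha : 0 < a) :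
    P {ω | (⨆ t ∈ Set.Ici (0:ℝ), ((fbmJ a B t ω : ℝ) : EReal)) < ⊤} = 1 := by
  have hae : ∀ᵐ ω ∂P, (⨆ t ∈ Set.Ici (0:ℝ), ((fbmJ a B t ω : ℝ) : EReal)) < ⊤ := by
    filter_upwards [hB.cont, hB.ae_exists_abs_le_mul_exp hH.1 (half_pos ha)]
      with ω hcont ⟨C, hC⟩
    exact (iSup₂_le fun t (ht : t ∈ Ici 0) => EReal.coe_le_coe_iff.mpr
      (fbmJ_le_of_abs_le_mul_exp ha.le (half_lt_self ha) hcont hC ht)).trans_lt (EReal.coe_lt_top _)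
  exact (measure_congr (ae_eq_univ.mpr (ae_iff.mp hae))).trans measure_univ
end

section
/- Let H ∈ (0,1), let B^H be a fractional Brownian motion with Hurst parameter H on a probability space (Ω, F, P), let a ∈ ℝ, and set J_t := e^{−at} B^H_t + a ∫₀ᵗ e^{−as} B^H_s ds. Then for every t ≥ 0, the random variable J_t is Gaussian with mean 0 and variance V_t² := H ∫₀ᵗ z^{2H−1} ( e^{az − 2at} + e^{−az} ) dz; that is, the law of J_t is the Gaussian measure on ℝ with mean 0 and variance V_t². -/
open MeasureTheory ProbabilityTheory Filter Set

/-!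
Let `μ_t = e^{-at} δ_t + a e^{-as} ds` on `[0, t]`, a signed measure of total mass one, so that
`J_t = ∫ B dμ_t` path by path. Replacing `ds` by right-endpoint Riemann sums gives finite linear
combinations of values of `B`: they are centered Gaussian, converge to `J_t` almost surely by path
continuity, and their variances converge to `∫∫ ρ_H dμ_t dμ_t` by uniform continuity of `ρ_H`.
Characteristic functions carry the Gaussian law to the limit.

The double integral is computed by integration by parts, `∫ f dμ_t = f(0) + ∫₀ᵗ e^{-as} f'(s) ds`.
It gives `∫ r^{2H} dμ_t(r) = 2H ∫₀ᵗ e^{-ar} r^{2H-1} dr` and, after the substitutions `r = s ± u`,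
`∫ |s - r|^{2H} dμ_t(r)`, whose `s^{2H}` term cancels the one in `ρ_H(s, r)`; one more integration
by parts in `s` finishes the computation.
-/

open scoped NNReal Topology

noncomputable def riemannSum (t : ℝ) (n : ℕ) (f : ℝ → ℝ) : ℝ :=
  ∑ k ∈ Finset.range n, t / n * f ((k + 1) * (t / n))

theorem div_add_one_mul_lt {ε t : ℝ} (hε : 0 < ε) (ht : 0 ≤ t) : ε / (t + 1) * t < ε := by
  rw [div_mul_eq_mul_div, div_lt_iff₀ (by positivity)]
  nlinarith

theorem natCast_mul_div_mem_Icc {t : ℝ} (ht : 0 ≤ t) {k n : ℕ} (hk : k ≤ n) :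
    (k : ℝ) * (t / n) ∈ Icc 0 t := by
  refine ⟨by positivity, ?_⟩
  rcases n.eq_zero_or_pos with rfl | hn
  · simp [ht]
  · calc (k : ℝ) * (t / n) ≤ n * (t / n) := by gcongr
      _ = t := by field_simp

theorem abs_mul_sub_integral_le_of_abs_sub_le {f : ℝ → ℝ} {a b ε : ℝ} (hab : a ≤ b)
    (hf : IntervalIntegrable f volume a b) (hε : ∀ s ∈ Ioc a b, |f b - f s| ≤ ε) :
    |(b - a) * f b - ∫ s in a..b, f s| ≤ ε * (b - a) := by
  calc |(b - a) * f b - ∫ s in a..b, f s| = |∫ s in a..b, (f b - f s)| := by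
        rw [intervalIntegral.integral_sub (intervalIntegrable_const (c := f b)) hf,
          intervalIntegral.integral_const, smul_eq_mul]
    _ ≤ ε * |b - a| := intervalIntegral.norm_integral_le_of_norm_le_const
        (f := fun s => f b - f s) fun s hs => hε s (by rwa [uIoc_of_le hab] at hs)
    _ = ε * (b - a) := by rw [abs_of_nonneg (sub_nonneg.2 hab)]

theorem abs_riemannSum_sub_integral_le {f : ℝ → ℝ} {t ε : ℝ} {n : ℕ} (ht : 0 ≤ t) (hn : 0 < n)
    (hf : IntervalIntegrable f volume 0 t)
    (hmod : ∀ x ∈ Icc 0 t, ∀ y ∈ Icc 0 t, |x - y| ≤ t / n → |f x - f y| ≤ ε) :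
    |riemannSum t n f - ∫ s in (0:ℝ)..t, f s| ≤ ε * t := by
  set δ := t / n with hδ
  have hδ0 : 0 ≤ δ := by positivity
  have hnδ : n * δ = t := by rw [hδ]; field_simp
  have hmem {k : ℕ} (hk : k ≤ n) : k * δ ∈ Icc 0 t := natCast_mul_div_mem_Icc ht hk
  have hpiece {k : ℕ} (hk : k < n) :
      |δ * f ((k + 1) * δ) - ∫ s in k * δ..(k + 1) * δ, f s| ≤ ε * δ := by
    have hle : k * δ ≤ (k + 1) * δ := by linarith
    have hsub : Icc (k * δ) ((k + 1) * δ) ⊆ Icc 0 t := by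
      simpa using Icc_subset_Icc (hmem hk.le).1 (hmem hk).2
    have h := abs_mul_sub_integral_le_of_abs_sub_le hle
      (hf.mono_set (by rwa [uIcc_of_le ht, uIcc_of_le hle])) fun s hs =>
        hmod _ (hsub ⟨hle, le_rfl⟩) _ (hsub (Ioc_subset_Icc_self hs))
          (abs_le.2 ⟨by linarith [hs.2], by linarith [hs.1]⟩)
    rwa [show (k + 1) * δ - k * δ = δ by ring] at h
  have hsplit : ∫ s in (0:ℝ)..t, f s
      = ∑ k ∈ Finset.range n, ∫ s in k * δ..(k + 1) * δ, f s := by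
    have := intervalIntegral.sum_integral_adjacent_intervals (a := fun k : ℕ => k * δ) (f := f)
      (μ := volume) (n := n) fun k hk => hf.mono_set ?_
    · simpa [hnδ] using this.symm
    · rw [uIcc_of_le ht]
      exact uIcc_subset_Icc (hmem hk.le) (hmem (Nat.succ_le_of_lt hk))
  calc |riemannSum t n f - ∫ s in (0:ℝ)..t, f s|
      = |∑ k ∈ Finset.range n, (δ * f ((k + 1) * δ) - ∫ s in k * δ..(k + 1) * δ, f s)| := by
        rw [hsplit, Finset.sum_sub_distrib, riemannSum]
    _ ≤ ∑ k ∈ Finset.range n, ε * δ := (Finset.abs_sum_le_sum_abs _ _).trans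
        (Finset.sum_le_sum fun k hk => hpiece (Finset.mem_range.1 hk))
    _ = ε * t := by rw [Finset.sum_const, Finset.card_range, nsmul_eq_mul, ← hnδ]; ring

theorem riemannSum_sub (t : ℝ) (n : ℕ) (f g : ℝ → ℝ) :
    riemannSum t n (f - g) = riemannSum t n f - riemannSum t n g := by
  simp [riemannSum, mul_sub, Finset.sum_sub_distrib]

theorem riemannSum_const_mul (t : ℝ) (n : ℕ) (c : ℝ) (f : ℝ → ℝ) :
    riemannSum t n (fun s => c * f s) = c * riemannSum t n f := by
  simp only [riemannSum, Finset.mul_sum]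
  exact Finset.sum_congr rfl fun _ _ => by ring

theorem abs_riemannSum_le {f : ℝ → ℝ} {t M : ℝ} (ht : 0 ≤ t) (n : ℕ)
    (hM : ∀ s ∈ Icc 0 t, |f s| ≤ M) : |riemannSum t n f| ≤ M * t := by
  have hM0 : 0 ≤ M := (abs_nonneg _).trans (hM 0 ⟨le_rfl, ht⟩)
  rcases n.eq_zero_or_pos with rfl | hn
  · simpa [riemannSum] using mul_nonneg hM0 ht
  calc |riemannSum t n f| ≤ ∑ k ∈ Finset.range n, t / n * M := by
        refine (Finset.abs_sum_le_sum_abs _ _).trans (Finset.sum_le_sum fun k hk => ?_)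
        rw [abs_mul, abs_of_nonneg (by positivity)]
        gcongr
        exact hM _ (by simpa using natCast_mul_div_mem_Icc ht (Finset.mem_range.1 hk))
    _ = M * t := by rw [Finset.sum_const, Finset.card_range, nsmul_eq_mul]; field_simp

theorem tendstoUniformlyOn_riemannSum {F : ℝ → ℝ → ℝ} {K : Set ℝ} {t : ℝ} (hK : IsCompact K)
    (ht : 0 ≤ t) (hF : ContinuousOn (Function.uncurry F) (K ×ˢ Icc 0 t)) :
    TendstoUniformlyOn (fun n s => riemannSum t n (F s)) (fun s => ∫ r in (0:ℝ)..t, F s r)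
      atTop K := by
  rw [Metric.tendstoUniformlyOn_iff]
  intro ε hε
  obtain ⟨δ, hδ, hFδ⟩ := Metric.uniformContinuousOn_iff.mp
    ((hK.prod isCompact_Icc).uniformContinuousOn_of_continuous hF) (ε / (t + 1)) (by positivity)
  have hmesh : ∀ᶠ n : ℕ in atTop, t / n < δ :=
    (tendsto_const_div_atTop_nhds_zero_nat t).eventually (gt_mem_nhds hδ)
  filter_upwards [hmesh, eventually_gt_atTop 0] with n hn hn0 s hs
  have hslice : ContinuousOn (F s) (Icc 0 t) :=
    hF.comp (f := fun r => (s, r)) (by fun_prop) fun r hr => ⟨hs, hr⟩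
  rw [Real.dist_eq, abs_sub_comm]
  refine lt_of_le_of_lt (abs_riemannSum_sub_integral_le ht hn0
    (hslice.intervalIntegrable_of_Icc ht) fun x hx y hy hxy => ?_) (div_add_one_mul_lt hε ht)
  have h := hFδ (s, x) ⟨hs, hx⟩ (s, y) ⟨hs, hy⟩
    (by simpa [Prod.dist_eq, Real.dist_eq] using hxy.trans_lt hn)
  simpa [Real.dist_eq] using h.le

theorem tendsto_riemannSum {f : ℝ → ℝ} {t : ℝ} (ht : 0 ≤ t) (hf : ContinuousOn f (Icc 0 t)) :
    Tendsto (fun n => riemannSum t n f) atTop (𝓝 (∫ s in (0:ℝ)..t, f s)) :=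
  (tendstoUniformlyOn_riemannSum (F := fun _ => f) isCompact_singleton ht
    (hf.comp continuousOn_snd fun _ hp => hp.2)).tendsto_at (mem_singleton 0)

theorem tendsto_riemannSum_of_tendstoUniformlyOn {g : ℕ → ℝ → ℝ} {f : ℝ → ℝ} {t : ℝ}
    (ht : 0 ≤ t) (hg : TendstoUniformlyOn g f atTop (Icc 0 t)) (hf : ContinuousOn f (Icc 0 t)) :
    Tendsto (fun n => riemannSum t n (g n)) atTop (𝓝 (∫ s in (0:ℝ)..t, f s)) := by
  have hdiff : Tendsto (fun n => riemannSum t n (g n) - riemannSum t n f) atTop (𝓝 0) := by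
    rw [Metric.tendstoUniformlyOn_iff] at hg
    refine Metric.tendsto_nhds.2 fun ε hε => ?_
    filter_upwards [hg (ε / (t + 1)) (by positivity)] with n hn
    rw [Real.dist_0_eq_abs, ← riemannSum_sub]
    refine lt_of_le_of_lt (abs_riemannSum_le ht n fun s hs => ?_) (div_add_one_mul_lt hε ht)
    simpa [Real.dist_eq, abs_sub_comm] using (hn s hs).le
  simpa using (tendsto_riemannSum ht hf).add hdiff

theorem continuous_exp_neg_mul (a : ℝ) : Continuous fun s => Real.exp (-(a * s)) := by
  fun_prop

theorem hasDerivAt_exp_neg_mul (a s : ℝ) :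
    HasDerivAt (fun s => Real.exp (-(a * s))) (-a * Real.exp (-(a * s))) s :=
  ((hasDerivAt_id s).const_mul a).fun_neg.exp.congr_deriv (by simp only [id]; ring)

/-- `∫ f dμ_t`, so that `fbmJ a B t ω = jFunctional a t (B · ω)`. -/
noncomputable def jFunctional (a t : ℝ) (f : ℝ → ℝ) : ℝ :=
  Real.exp (-(a * t)) * f t + a * ∫ s in (0:ℝ)..t, Real.exp (-(a * s)) * f s

noncomputable def jRiemannSum (a t : ℝ) (n : ℕ) (f : ℝ → ℝ) : ℝ :=
  Real.exp (-(a * t)) * f t + a * riemannSum t n fun s => Real.exp (-(a * s)) * f s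

noncomputable def jNode (t : ℝ) (n : ℕ) : Fin (n + 1) → ℝ :=
  Fin.cons t fun k => (k + 1) * (t / n)

noncomputable def jWeight (a t : ℝ) (n : ℕ) : Fin (n + 1) → ℝ :=
  Fin.cons (Real.exp (-(a * t))) fun k => a * (t / n * Real.exp (-(a * ((k + 1) * (t / n)))))

theorem jNode_nonneg {t : ℝ} (ht : 0 ≤ t) (n : ℕ) (i : Fin (n + 1)) : 0 ≤ jNode t n i := by
  refine Fin.cases ht (fun k => ?_) i
  simp only [jNode, Fin.cons_succ]
  positivity

theorem jRiemannSum_eq_sum (a t : ℝ) (n : ℕ) (f : ℝ → ℝ) :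
    jRiemannSum a t n f = ∑ i, jWeight a t n i * f (jNode t n i) := by
  rw [Fin.sum_univ_succ, jRiemannSum, riemannSum, Finset.mul_sum,
    ← Fin.sum_univ_eq_sum_range (fun k => a * (t / n * (Real.exp (-(a * ((k + 1) * (t / n))))
      * f ((k + 1) * (t / n)))))]
  simp only [jWeight, jNode, Fin.cons_zero, Fin.cons_succ, mul_assoc]

theorem jRiemannSum_const_mul (a t : ℝ) (n : ℕ) (c : ℝ) (f : ℝ → ℝ) :
    jRiemannSum a t n (fun s => c * f s) = c * jRiemannSum a t n f := by
  simp only [jRiemannSum, mul_left_comm _ c, riemannSum_const_mul]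
  ring

theorem jFunctional_const_mul (a t : ℝ) (c : ℝ) (f : ℝ → ℝ) :
    jFunctional a t (fun s => c * f s) = c * jFunctional a t f := by
  simp only [jFunctional, mul_left_comm _ c, intervalIntegral.integral_const_mul]
  ring

theorem tendsto_jRiemannSum {a t : ℝ} {f : ℝ → ℝ} (ht : 0 ≤ t) (hf : ContinuousOn f (Icc 0 t)) :
    Tendsto (fun n => jRiemannSum a t n f) atTop (𝓝 (jFunctional a t f)) :=
  ((tendsto_riemannSum ht ((continuous_exp_neg_mul a).continuousOn.mul hf)).const_mul a).const_add _

theorem tendstoUniformlyOn_jRiemannSum {a t : ℝ} {ρ : ℝ → ℝ → ℝ} {K : Set ℝ} (hK : IsCompact K)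
    (ht : 0 ≤ t) (hρ : ContinuousOn (Function.uncurry ρ) (K ×ˢ Icc 0 t)) :
    TendstoUniformlyOn (fun n s => jRiemannSum a t n (ρ s)) (fun s => jFunctional a t (ρ s))
      atTop K := by
  have hexp : ContinuousOn (fun p : ℝ × ℝ => Real.exp (-(a * p.2))) (K ×ˢ Icc 0 t) := by
    fun_prop
  have h := Metric.tendstoUniformlyOn_iff.mp (tendstoUniformlyOn_riemannSum
    (F := fun s r => Real.exp (-(a * r)) * ρ s r) hK ht (hexp.mul hρ))
  refine Metric.tendstoUniformlyOn_iff.mpr fun ε hε => ?_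
  filter_upwards [h (ε / (|a| + 1)) (by positivity)] with n hn s hs
  have hdist : dist (jFunctional a t (ρ s)) (jRiemannSum a t n (ρ s))
      = |a| * dist (∫ r in (0:ℝ)..t, Real.exp (-(a * r)) * ρ s r)
          (riemannSum t n fun r => Real.exp (-(a * r)) * ρ s r) := by
    simp only [jFunctional, jRiemannSum, Real.dist_eq, add_sub_add_left_eq_sub, ← mul_sub, abs_mul]
  rw [hdist]
  calc |a| * _ ≤ ε / (|a| + 1) * |a| := by rw [mul_comm]; gcongr; exact (hn s hs).le
    _ < ε := div_add_one_mul_lt hε (abs_nonneg a)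

theorem tendsto_jRiemannSum_jRiemannSum {a t : ℝ} {ρ : ℝ → ℝ → ℝ} (ht : 0 ≤ t)
    (hρ : Continuous (Function.uncurry ρ)) :
    Tendsto (fun n => jRiemannSum a t n fun s => jRiemannSum a t n (ρ s)) atTop
      (𝓝 (jFunctional a t fun s => jFunctional a t (ρ s))) := by
  set ρ' : ℝ → ℝ → ℝ := fun s r => Real.exp (-(a * s)) * ρ s r
  have hρ' : Continuous (Function.uncurry ρ') := by fun_prop
  have hinner : Tendsto (fun n => riemannSum t n fun s => jRiemannSum a t n (ρ' s)) atTop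
      (𝓝 (∫ s in (0:ℝ)..t, jFunctional a t (ρ' s))) := by
    refine tendsto_riemannSum_of_tendstoUniformlyOn ht
      (tendstoUniformlyOn_jRiemannSum isCompact_Icc ht hρ'.continuousOn)
      (Continuous.continuousOn ?_)
    unfold jFunctional
    fun_prop
  have hend : Tendsto (fun n => jRiemannSum a t n (ρ t)) atTop (𝓝 (jFunctional a t (ρ t))) :=
    tendsto_jRiemannSum ht (hρ.comp (Continuous.prodMk_right t)).continuousOn
  have hsum (n : ℕ) : (jRiemannSum a t n fun s => jRiemannSum a t n (ρ s))
      = Real.exp (-(a * t)) * jRiemannSum a t n (ρ t)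
        + a * riemannSum t n fun s => jRiemannSum a t n (ρ' s) := by
    simp only [ρ', jRiemannSum_const_mul]
    rfl
  have hlim : (jFunctional a t fun s => jFunctional a t (ρ s))
      = Real.exp (-(a * t)) * jFunctional a t (ρ t)
        + a * ∫ s in (0:ℝ)..t, jFunctional a t (ρ' s) := by
    simp only [ρ', jFunctional_const_mul]
    rfl
  rw [funext hsum, hlim]
  exact (hend.const_mul _).add (hinner.const_mul a)

theorem jFunctional_congr {a t : ℝ} {f g : ℝ → ℝ} (ht : 0 ≤ t) (h : EqOn f g (Icc 0 t)) :
    jFunctional a t f = jFunctional a t g := by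
  unfold jFunctional
  rw [h ⟨ht, le_rfl⟩, intervalIntegral.integral_congr fun s hs => ?_]
  rw [uIcc_of_le ht] at hs
  simp only [h hs]

theorem jFunctional_add {a t : ℝ} {f g : ℝ → ℝ} (hf : IntervalIntegrable f volume 0 t)
    (hg : IntervalIntegrable g volume 0 t) :
    jFunctional a t (fun s => f s + g s) = jFunctional a t f + jFunctional a t g := by
  have hE := (continuous_exp_neg_mul a).continuousOn (s := uIcc 0 t)
  simp only [jFunctional, mul_add,
    intervalIntegral.integral_add (hf.continuousOn_mul hE) (hg.continuousOn_mul hE)]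
  ring

theorem jFunctional_sub {a t : ℝ} {f g : ℝ → ℝ} (hf : IntervalIntegrable f volume 0 t)
    (hg : IntervalIntegrable g volume 0 t) :
    jFunctional a t (fun s => f s - g s) = jFunctional a t f - jFunctional a t g := by
  have hE := (continuous_exp_neg_mul a).continuousOn (s := uIcc 0 t)
  simp only [jFunctional, mul_sub,
    intervalIntegral.integral_sub (hf.continuousOn_mul hE) (hg.continuousOn_mul hE)]
  ring

theorem jFunctional_eq_add_integral_deriv {a t : ℝ} {f f' : ℝ → ℝ} (ht : 0 ≤ t)
    (hf : ContinuousOn f (Icc 0 t)) (hderiv : ∀ s ∈ Ioo 0 t, HasDerivAt f (f' s) s)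
    (hf' : IntervalIntegrable f' volume 0 t) :
    jFunctional a t f = f 0 + ∫ s in (0:ℝ)..t, Real.exp (-(a * s)) * f' s := by
  have hE := continuous_exp_neg_mul a
  have hEf : IntervalIntegrable (fun s => Real.exp (-(a * s)) * f s) volume 0 t :=
    (hE.continuousOn.mul hf).intervalIntegrable_of_Icc ht
  have hEf' : IntervalIntegrable (fun s => Real.exp (-(a * s)) * f' s) volume 0 t :=
    hf'.continuousOn_mul hE.continuousOn
  have hFTC := intervalIntegral.integral_eq_sub_of_hasDeriv_right_of_le ht
    (hE.continuousOn.mul hf)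
    (f' := fun s => -a * (Real.exp (-(a * s)) * f s) + Real.exp (-(a * s)) * f' s)
    (fun s hs => (((hasDerivAt_exp_neg_mul a s).mul (hderiv s hs)).congr_deriv
      (by ring)).hasDerivWithinAt)
    ((hEf.const_mul (-a)).add hEf')
  rw [intervalIntegral.integral_add (hEf.const_mul (-a)) hEf', intervalIntegral.integral_const_mul]
    at hFTC
  simp only [Pi.mul_apply, mul_zero, neg_zero, Real.exp_zero, one_mul] at hFTC
  unfold jFunctional
  linarith

theorem jFunctional_const (a : ℝ) {t : ℝ} (ht : 0 ≤ t) (c : ℝ) :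
    jFunctional a t (fun _ => c) = c := by
  simpa using jFunctional_eq_add_integral_deriv (a := a) ht continuousOn_const
    (fun s _ => hasDerivAt_const s c) (intervalIntegrable_const (c := 0))

noncomputable def rpowExpIntegral (p a x : ℝ) : ℝ :=
  ∫ u in (0:ℝ)..x, Real.exp (-(a * u)) * u ^ p

theorem intervalIntegrable_exp_mul_rpow {p : ℝ} (hp : -1 < p) (a x y : ℝ) :
    IntervalIntegrable (fun u => Real.exp (-(a * u)) * u ^ p) volume x y :=
  (intervalIntegral.intervalIntegrable_rpow' hp).continuousOn_mul (by fun_prop)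

theorem continuous_rpowExpIntegral {p : ℝ} (hp : -1 < p) (a : ℝ) :
    Continuous (rpowExpIntegral p a) :=
  intervalIntegral.continuous_primitive (fun _ _ => intervalIntegrable_exp_mul_rpow hp a _ _) 0

theorem hasDerivAt_rpowExpIntegral {p : ℝ} (hp : -1 < p) (a : ℝ) {x : ℝ} (hx : 0 < x) :
    HasDerivAt (rpowExpIntegral p a) (Real.exp (-(a * x)) * x ^ p) x := by
  have hcont : ContinuousOn (fun u : ℝ => Real.exp (-(a * u)) * u ^ p) (Ioi 0) :=
    fun u hu => ((continuous_exp_neg_mul a).continuousAt.mul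
      (Real.continuousAt_rpow_const u p (Or.inl (ne_of_gt hu)))).continuousWithinAt
  exact intervalIntegral.integral_hasDerivAt_right (intervalIntegrable_exp_mul_rpow hp a 0 x)
    (hcont.stronglyMeasurableAtFilter isOpen_Ioi x hx) (hcont.continuousAt (Ioi_mem_nhds hx))

theorem jFunctional_rpow {β : ℝ} (hβ : 0 < β) (a : ℝ) {x : ℝ} (hx : 0 ≤ x) :
    jFunctional a x (fun u => u ^ β) = β * rpowExpIntegral (β - 1) a x := by
  rw [jFunctional_eq_add_integral_deriv hx (f' := fun u => β * u ^ (β - 1))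
    (Real.continuous_rpow_const hβ.le).continuousOn
    (fun u hu => Real.hasDerivAt_rpow_const (Or.inl hu.1.ne'))
    ((intervalIntegral.intervalIntegrable_rpow' (by linarith)).const_mul β),
    Real.zero_rpow hβ.ne', zero_add, rpowExpIntegral, ← intervalIntegral.integral_const_mul]
  exact intervalIntegral.integral_congr fun u _ => by ring

theorem integral_exp_neg_mul_mul_comp_sub_left (a s : ℝ) (g : ℝ → ℝ) :
    ∫ r in (0:ℝ)..s, Real.exp (-(a * r)) * g (s - r)
      = Real.exp (-(a * s)) * ∫ u in (0:ℝ)..s, Real.exp (a * u) * g u := by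
  have h := intervalIntegral.integral_comp_sub_left
    (fun u => Real.exp (-(a * (s - u))) * g u) (a := 0) (b := s) s
  simp only [sub_sub_cancel, sub_self, sub_zero] at h
  rw [h, ← intervalIntegral.integral_const_mul]
  refine intervalIntegral.integral_congr fun u _ => ?_
  rw [← mul_assoc, ← Real.exp_add]
  ring_nf

theorem integral_exp_neg_mul_mul_comp_sub_right (a s t : ℝ) (g : ℝ → ℝ) :
    ∫ r in s..t, Real.exp (-(a * r)) * g (r - s)
      = Real.exp (-(a * s)) * ∫ u in (0:ℝ)..t - s, Real.exp (-(a * u)) * g u := by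
  have h := intervalIntegral.integral_comp_sub_right
    (fun u => Real.exp (-(a * (u + s))) * g u) (a := s) (b := t) s
  simp only [sub_add_cancel, sub_self] at h
  rw [h, ← intervalIntegral.integral_const_mul]
  refine intervalIntegral.integral_congr fun u _ => ?_
  rw [← mul_assoc, ← Real.exp_add]
  ring_nf

theorem jFunctional_abs_sub_rpow {β : ℝ} (hβ : 0 < β) (a : ℝ) {s t : ℝ} (hs : 0 ≤ s)
    (hst : s ≤ t) :
    jFunctional a t (fun r => |s - r| ^ β)
      = s ^ β + β * Real.exp (-(a * s))
          * (rpowExpIntegral (β - 1) a (t - s) - rpowExpIntegral (β - 1) (-a) s) := by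
  have hpow : Continuous fun r : ℝ => |r| ^ β :=
    (Real.continuous_rpow_const hβ.le).comp continuous_abs
  have hcont : Continuous fun r => Real.exp (-(a * r)) * |s - r| ^ β :=
    (continuous_exp_neg_mul a).mul (hpow.comp (by fun_prop))
  have hleft : ∫ r in (0:ℝ)..s, Real.exp (-(a * r)) * |s - r| ^ β
      = Real.exp (-(a * s)) * ∫ u in (0:ℝ)..s, Real.exp (a * u) * u ^ β := by
    rw [← integral_exp_neg_mul_mul_comp_sub_left]
    refine intervalIntegral.integral_congr fun r hr => ?_
    rw [uIcc_of_le hs] at hr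
    simp only [abs_of_nonneg (sub_nonneg.2 hr.2)]
  have hright : ∫ r in s..t, Real.exp (-(a * r)) * |s - r| ^ β
      = Real.exp (-(a * s)) * ∫ u in (0:ℝ)..t - s, Real.exp (-(a * u)) * u ^ β := by
    rw [← integral_exp_neg_mul_mul_comp_sub_right]
    refine intervalIntegral.integral_congr fun r hr => ?_
    rw [uIcc_of_le hst] at hr
    simp only [abs_sub_comm s r, abs_of_nonneg (sub_nonneg.2 hr.1)]
  have hjs := jFunctional_rpow hβ (-a) hs
  have hjts := jFunctional_rpow hβ a (sub_nonneg.2 hst)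
  have hexp₁ : Real.exp (-(a * s)) * Real.exp (a * s) = 1 := by
    rw [← Real.exp_add]; simp
  have hexp₂ : Real.exp (-(a * s)) * Real.exp (-(a * (t - s))) = Real.exp (-(a * t)) := by
    rw [← Real.exp_add]; ring_nf
  simp only [jFunctional, neg_mul, neg_neg] at hjs hjts ⊢
  rw [← intervalIntegral.integral_add_adjacent_intervals (hcont.intervalIntegrable 0 s)
    (hcont.intervalIntegrable s t), hleft, hright, abs_sub_comm, abs_of_nonneg (sub_nonneg.2 hst)]
  linear_combination (-Real.exp (-(a * s))) * hjs + Real.exp (-(a * s)) * hjts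
    + s ^ β * hexp₁ - (t - s) ^ β * hexp₂

-- Here and in the next lemma, integration by parts and the definition of `jFunctional` express
-- the left side through `∫₀ᵗ e^{-as} f(s) ds` with opposite signs; their average eliminates it.
theorem jFunctional_exp_mul_rpowExpIntegral_neg {p : ℝ} (hp : -1 < p) (a : ℝ) {t : ℝ}
    (ht : 0 ≤ t) :
    jFunctional a t (fun s => Real.exp (-(a * s)) * rpowExpIntegral p (-a) s)
      = (Real.exp (-(a * t)) ^ 2 * rpowExpIntegral p (-a) t + rpowExpIntegral p a t) / 2 := by
  set f := fun s => Real.exp (-(a * s)) * rpowExpIntegral p (-a) s with hf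
  have hfc : Continuous f := (continuous_exp_neg_mul a).mul
    (continuous_rpowExpIntegral hp (-a))
  have hderiv (s : ℝ) (hs : s ∈ Ioo 0 t) : HasDerivAt f (-a * f s + s ^ p) s := by
    refine ((hasDerivAt_exp_neg_mul a s).mul
      (hasDerivAt_rpowExpIntegral hp (-a) hs.1)).congr_deriv ?_
    have : Real.exp (-(a * s)) * Real.exp (-(-a * s)) = 1 := by rw [← Real.exp_add]; simp
    linear_combination s ^ p * this
  have hint : IntervalIntegrable (fun s => Real.exp (-(a * s)) * f s) volume 0 t :=
    ((continuous_exp_neg_mul a).mul hfc).intervalIntegrable 0 t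
  have hparts := jFunctional_eq_add_integral_deriv (a := a) ht hfc.continuousOn hderiv
    (((hfc.intervalIntegrable 0 t).const_mul (-a)).add
      (intervalIntegral.intervalIntegrable_rpow' hp))
  have hsplit : ∫ s in (0:ℝ)..t, Real.exp (-(a * s)) * (-a * f s + s ^ p)
      = -a * (∫ s in (0:ℝ)..t, Real.exp (-(a * s)) * f s) + rpowExpIntegral p a t := by
    rw [rpowExpIntegral, ← intervalIntegral.integral_const_mul, ← intervalIntegral.integral_add
      (hint.const_mul _) (intervalIntegrable_exp_mul_rpow hp a 0 t)]
    exact intervalIntegral.integral_congr fun s _ => by ring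
  have hf0 : f 0 = 0 := by simp [hf, rpowExpIntegral]
  have hdef : jFunctional a t f
      = Real.exp (-(a * t)) * (Real.exp (-(a * t)) * rpowExpIntegral p (-a) t)
        + a * ∫ s in (0:ℝ)..t, Real.exp (-(a * s)) * f s := rfl
  rw [hsplit, hf0, zero_add] at hparts
  linear_combination (hparts + hdef) / 2

theorem jFunctional_exp_mul_rpowExpIntegral_sub {p : ℝ} (hp : -1 < p) (a : ℝ) {t : ℝ}
    (ht : 0 ≤ t) :
    jFunctional a t (fun s => Real.exp (-(a * s)) * rpowExpIntegral p a (t - s))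
      = (rpowExpIntegral p a t - Real.exp (-(a * t)) ^ 2 * rpowExpIntegral p (-a) t) / 2 := by
  set g := fun s => Real.exp (-(a * s)) * rpowExpIntegral p a (t - s) with hg
  have hgc : Continuous g := (continuous_exp_neg_mul a).mul
    ((continuous_rpowExpIntegral hp a).comp (by fun_prop))
  have hderiv (s : ℝ) (hs : s ∈ Ioo 0 t) :
      HasDerivAt g (-a * g s - Real.exp (-(a * t)) * (t - s) ^ p) s := by
    refine ((hasDerivAt_exp_neg_mul a s).mul ((hasDerivAt_rpowExpIntegral hp a
      (sub_pos.2 hs.2)).comp s ((hasDerivAt_id s).const_sub t))).congr_deriv ?_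
    have : Real.exp (-(a * s)) * Real.exp (-(a * (t - s))) = Real.exp (-(a * t)) := by
      rw [← Real.exp_add]; ring_nf
    simp only [Function.comp_def]
    linear_combination -(t - s) ^ p * this
  have hint : IntervalIntegrable (fun s => Real.exp (-(a * s)) * g s) volume 0 t :=
    ((continuous_exp_neg_mul a).mul hgc).intervalIntegrable 0 t
  have hpow : IntervalIntegrable (fun s => (t - s) ^ p) volume 0 t := by
    simpa using (intervalIntegral.intervalIntegrable_rpow' hp (a := t) (b := 0)).comp_sub_left t
  have hparts := jFunctional_eq_add_integral_deriv (a := a) ht hgc.continuousOn hderiv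
    ((hgc.intervalIntegrable 0 t).const_mul (-a) |>.sub (hpow.const_mul _))
  have hsplit :
      ∫ s in (0:ℝ)..t, Real.exp (-(a * s)) * (-a * g s - Real.exp (-(a * t)) * (t - s) ^ p)
      = -a * (∫ s in (0:ℝ)..t, Real.exp (-(a * s)) * g s)
        - Real.exp (-(a * t)) ^ 2 * rpowExpIntegral p (-a) t := by
    have hconv : ∫ s in (0:ℝ)..t, Real.exp (-(a * s)) * (t - s) ^ p
        = Real.exp (-(a * t)) * rpowExpIntegral p (-a) t := by
      simpa only [rpowExpIntegral, neg_mul, neg_neg]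
        using integral_exp_neg_mul_mul_comp_sub_left a t fun u => u ^ p
    rw [sq, mul_assoc, ← hconv, ← intervalIntegral.integral_const_mul,
      ← intervalIntegral.integral_const_mul, ← intervalIntegral.integral_sub (hint.const_mul _)
      ((hpow.continuousOn_mul (continuous_exp_neg_mul a).continuousOn).const_mul _)]
    exact intervalIntegral.integral_congr fun s _ => by ring
  have hgt : g t = 0 := by simp [hg, rpowExpIntegral]
  have hdef : jFunctional a t g
      = Real.exp (-(a * t)) * g t + a * ∫ s in (0:ℝ)..t, Real.exp (-(a * s)) * g s := rfl
  rw [hsplit] at hparts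
  rw [hgt] at hdef
  simp only [hg, sub_zero, Real.exp_zero, neg_zero, mul_zero, one_mul] at hparts
  linear_combination (hparts + hdef) / 2

theorem jFunctional_fbmCov {H : ℝ} (hH : 0 < H) (a : ℝ) {s t : ℝ} (hs : 0 ≤ s) (hst : s ≤ t) :
    jFunctional a t (fbmCov H s)
      = H * rpowExpIntegral (2 * H - 1) a t
        - H * (Real.exp (-(a * s)) * rpowExpIntegral (2 * H - 1) a (t - s))
        + H * (Real.exp (-(a * s)) * rpowExpIntegral (2 * H - 1) (-a) s) := by
  have hpow : Continuous fun r : ℝ => r ^ (2 * H) := Real.continuous_rpow_const (by positivity)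
  have hsum : IntervalIntegrable (fun r : ℝ => s ^ (2 * H) + r ^ (2 * H)) volume 0 t :=
    (continuous_const.add hpow).intervalIntegrable _ _
  have habs : IntervalIntegrable (fun r : ℝ => |s - r| ^ (2 * H)) volume 0 t :=
    (hpow.comp (by fun_prop)).intervalIntegrable _ _
  have hcov : fbmCov H s = fun r => 2⁻¹ * ((s ^ (2 * H) + r ^ (2 * H)) - |s - r| ^ (2 * H)) := by
    funext r
    rw [fbmCov]
    ring
  rw [hcov, jFunctional_const_mul, jFunctional_sub hsum habs,
    jFunctional_add intervalIntegrable_const (hpow.intervalIntegrable _ _),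
    jFunctional_const a (hs.trans hst), jFunctional_rpow (by positivity) a (hs.trans hst),
    jFunctional_abs_sub_rpow (by positivity) a hs hst]
  ring

theorem integral_rpow_mul_exp_add_exp {p : ℝ} (hp : -1 < p) (a t : ℝ) :
    ∫ z in (0:ℝ)..t, z ^ p * (Real.exp (a * z - 2 * a * t) + Real.exp (-(a * z)))
      = rpowExpIntegral p a t + Real.exp (-(a * t)) ^ 2 * rpowExpIntegral p (-a) t := by
  rw [rpowExpIntegral, rpowExpIntegral, ← intervalIntegral.integral_const_mul,
    ← intervalIntegral.integral_add (intervalIntegrable_exp_mul_rpow hp a 0 t)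
      ((intervalIntegrable_exp_mul_rpow hp (-a) 0 t).const_mul _)]
  refine intervalIntegral.integral_congr fun z _ => ?_
  have : Real.exp (a * z - 2 * a * t) = Real.exp (-(a * t)) ^ 2 * Real.exp (-(-a * z)) := by
    rw [sq, ← Real.exp_add, ← Real.exp_add]
    ring_nf
  rw [this]
  ring

theorem jFunctional_jFunctional_fbmCov {H : ℝ} (hH : 0 < H) (a : ℝ) {t : ℝ} (ht : 0 ≤ t) :
    (jFunctional a t fun s => jFunctional a t (fbmCov H s))
      = H * ∫ z in (0:ℝ)..t,
          z ^ (2 * H - 1) * (Real.exp (a * z - 2 * a * t) + Real.exp (-(a * z))) := by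
  have hp : -1 < 2 * H - 1 := by linarith
  have hR := continuous_rpowExpIntegral hp
  have hE := continuous_exp_neg_mul a
  have hsub : Continuous fun s => Real.exp (-(a * s)) * rpowExpIntegral (2 * H - 1) a (t - s) :=
    hE.mul ((hR a).comp (by fun_prop))
  have hneg : Continuous fun s => Real.exp (-(a * s)) * rpowExpIntegral (2 * H - 1) (-a) s :=
    hE.mul (hR (-a))
  rw [jFunctional_congr ht fun s hs => jFunctional_fbmCov hH a hs.1 hs.2,
    jFunctional_add (intervalIntegrable_const.sub ((hsub.intervalIntegrable _ _).const_mul H))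
      ((hneg.intervalIntegrable _ _).const_mul H),
    jFunctional_sub intervalIntegrable_const ((hsub.intervalIntegrable _ _).const_mul H),
    jFunctional_const a ht, jFunctional_const_mul, jFunctional_const_mul,
    jFunctional_exp_mul_rpowExpIntegral_sub hp a ht,
    jFunctional_exp_mul_rpowExpIntegral_neg hp a ht,
    integral_rpow_mul_exp_add_exp hp]
  ring

theorem map_eq_gaussianReal_of_tendsto_ae {Ω : Type*} [MeasurableSpace Ω] {P : Measure Ω}
    [IsProbabilityMeasure P] {X : ℕ → Ω → ℝ} {Y : Ω → ℝ} {m : ℕ → ℝ} {v : ℕ → ℝ≥0}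
    {m₀ : ℝ} {v₀ : ℝ≥0} (hX : ∀ n, P.map (X n) = gaussianReal (m n) (v n))
    (hXY : ∀ᵐ ω ∂P, Tendsto (fun n => X n ω) atTop (𝓝 (Y ω)))
    (hm : Tendsto m atTop (𝓝 m₀)) (hv : Tendsto v atTop (𝓝 v₀)) :
    P.map Y = gaussianReal m₀ v₀ := by
  have hXm n : AEMeasurable (X n) P := aemeasurable_of_map_neZero (by rw [hX n]; infer_instance)
  have hYm : AEMeasurable Y P := aemeasurable_of_tendsto_metrizable_ae atTop hXm hXY
  have hlaw := ProbabilityMeasure.tendsto_iff_tendsto_charFun.mp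
    (tendstoInDistribution_of_ae_tendsto hXm hYm hXY).tendsto
  refine Measure.ext_of_charFun (funext fun ξ => tendsto_nhds_unique (hlaw ξ) ?_)
  simp only [ProbabilityMeasure.coe_mk, hX, charFun_gaussianReal]
  have hm' : Tendsto (fun n => (m n : ℂ)) atTop (𝓝 (m₀ : ℂ)) :=
    (Complex.continuous_ofReal.tendsto _).comp hm
  have hv' : Tendsto (fun n => ((v n : ℝ) : ℂ)) atTop (𝓝 ((v₀ : ℝ) : ℂ)) :=
    (Complex.continuous_ofReal.tendsto _).comp (NNReal.tendsto_coe.mpr hv)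
  exact (Complex.continuous_exp.tendsto _).comp
    (((hm'.const_mul _).mul_const _).sub ((hv'.mul_const _).div_const _))

theorem continuous_fbmCov {H : ℝ} (hH : 0 < H) : Continuous (Function.uncurry (fbmCov H)) := by
  have hpow : Continuous fun x : ℝ => x ^ (2 * H) := Real.continuous_rpow_const (by positivity)
  unfold fbmCov Function.uncurry
  fun_prop

theorem map_jRiemannSum_eq_gaussianReal {Ω : Type*} [MeasurableSpace Ω] {P : Measure Ω} {H : ℝ}
    {B : ℝ → Ω → ℝ} (hB : IsFractionalBrownianMotion P H B) (a : ℝ) {t : ℝ} (ht : 0 ≤ t)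
    (n : ℕ) :
    P.map (fun ω => jRiemannSum a t n fun s => B s ω)
      = gaussianReal 0 (jRiemannSum a t n fun s => jRiemannSum a t n (fbmCov H s)).toNNReal := by
  simp only [jRiemannSum_eq_sum, Finset.mul_sum, ← mul_assoc]
  exact hB.gaussian _ _ _ (jNode_nonneg ht n)

/-- For `J_t = e^{−at} B^H_t + a ∫₀ᵗ e^{−as} B^H_s ds` and `t ≥ 0`, the random variable `J_t`
is Gaussian with mean `0` and variance `V_t² = H ∫₀ᵗ z^{2H−1}(e^{az−2at} + e^{−az}) dz`;
that is, the law of `J_t` is the Gaussian measure on `ℝ` with mean `0` and variance `V_t²`. -/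
theorem fbmJ_law_gaussian
    {Ω : Type*} [MeasurableSpace Ω] (P : Measure Ω) [IsProbabilityMeasure P]
    (H : ℝ) (hH : H ∈ Set.Ioo (0:ℝ) 1)
    (B : ℝ → Ω → ℝ) (hB : IsFractionalBrownianMotion P H B)
    (a : ℝ) (t : ℝ) (ht : 0 ≤ t) :
    Measure.map (fun ω => fbmJ a B t ω) P
      = gaussianReal 0
          (H * ∫ z in (0:ℝ)..t,
            z ^ (2 * H - 1) * (Real.exp (a * z - 2 * a * t) + Real.exp (-(a * z)))).toNNReal := by
  have hpaths : ∀ᵐ ω ∂P,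
      Tendsto (fun n => jRiemannSum a t n fun s => B s ω) atTop (𝓝 (fbmJ a B t ω)) := by
    filter_upwards [hB.cont] with ω hω
    exact tendsto_jRiemannSum ht (hω.mono Icc_subset_Ici_self)
  have hvar := tendsto_jRiemannSum_jRiemannSum (a := a) ht (continuous_fbmCov hH.1)
  rw [← jFunctional_jFunctional_fbmCov hH.1 a ht]
  exact map_eq_gaussianReal_of_tendsto_ae (map_jRiemannSum_eq_gaussianReal hB a ht) hpaths
    tendsto_const_nhds ((continuous_real_toNNReal.tendsto _).comp hvar)
end

section
/- Let H ∈ (0,1) and a > 0. Then the function V_t² := H ∫₀ᵗ z^{2H−1} ( e^{az − 2at} + e^{−az} ) dz satisfies lim_{t → ∞} V_t² = H Γ(2H) / a^{2H}, where Γ denotes the Gamma function. -/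
open MeasureTheory Filter Set Real Topology

/-!
The first half of the integrand satisfies `e^{az - 2at} ≤ e^{-at}` on `[0, t]`, so its integral is
at most `t^{2H} e^{-at} / (2H) → 0`. The second half is the truncated Gamma integral
`∫₀ᵗ z^{2H-1} e^{-az} dz → Γ(2H) / a^{2H}`.
-/

lemma tendsto_intervalIntegral_rpow_mul_exp_neg_mul {s r : ℝ} (hs : 0 < s) (hr : 0 < r) :
    Tendsto (fun t : ℝ => ∫ z in (0 : ℝ)..t, z ^ (s - 1) * exp (-(r * z))) atTop
      (𝓝 (Gamma s / r ^ s)) := by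
  have hval := integral_rpow_mul_exp_neg_mul_Ioi hs hr
  have hint : IntegrableOn (fun z : ℝ => z ^ (s - 1) * exp (-(r * z))) (Ioi 0) :=
    .of_integral_ne_zero (by rw [hval]; positivity)
  rw [div_rpow zero_le_one hr.le, one_rpow, one_div_mul_eq_div] at hval
  exact hval ▸ intervalIntegral_tendsto_integral_Ioi 0 hint tendsto_id

lemma intervalIntegral_rpow_mul_exp_sub_le {s r t : ℝ} (hs : 0 < s) (hr : 0 ≤ r) (ht : 0 ≤ t) :
    ∫ z in (0 : ℝ)..t, z ^ (s - 1) * exp (r * z - 2 * r * t) ≤ t ^ s / s * exp (-(r * t)) := by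
  have hpow : IntervalIntegrable (fun z : ℝ => z ^ (s - 1)) volume 0 t :=
    intervalIntegral.intervalIntegrable_rpow' (by linarith)
  calc ∫ z in (0 : ℝ)..t, z ^ (s - 1) * exp (r * z - 2 * r * t)
      ≤ ∫ z in (0 : ℝ)..t, z ^ (s - 1) * exp (-(r * t)) := by
        refine intervalIntegral.integral_mono_on ht
          (hpow.mul_continuousOn (by fun_prop)) (hpow.mul_const _) fun z hz => ?_
        gcongr
        · exact rpow_nonneg hz.1 _
        · nlinarith [hz.2]
    _ = t ^ s / s * exp (-(r * t)) := by
        rw [intervalIntegral.integral_mul_const, integral_rpow (.inl (by linarith)),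
          sub_add_cancel, zero_rpow hs.ne', sub_zero]

lemma tendsto_intervalIntegral_rpow_mul_exp_sub {s r : ℝ} (hs : 0 < s) (hr : 0 < r) :
    Tendsto (fun t : ℝ => ∫ z in (0 : ℝ)..t, z ^ (s - 1) * exp (r * z - 2 * r * t)) atTop
      (𝓝 0) := by
  have hbound : Tendsto (fun t : ℝ => t ^ s / s * exp (-(r * t))) atTop (𝓝 0) := by
    simpa [div_mul_eq_mul_div] using
      (tendsto_rpow_mul_exp_neg_mul_atTop_nhds_zero s r hr).div_const s
  refine squeeze_zero' ?_ ?_ hbound <;> filter_upwards [eventually_ge_atTop 0] with t ht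
  · exact intervalIntegral.integral_nonneg ht fun z hz => by
      have := rpow_nonneg hz.1 (s - 1); positivity
  · exact intervalIntegral_rpow_mul_exp_sub_le hs hr.le ht

/-- For `H ∈ (0,1)` and `a > 0`, the function
`V_t² = H ∫₀ᵗ z^{2H−1}(e^{az−2at} + e^{−az}) dz` satisfies
`lim_{t→∞} V_t² = H Γ(2H)/a^{2H}`. -/
theorem variance_limit_at_infinity
    (H : ℝ) (hH : H ∈ Set.Ioo (0:ℝ) 1) (a : ℝ) (ha : 0 < a) :
    Filter.Tendsto
      (fun t : ℝ => H * ∫ z in (0:ℝ)..t,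
        z ^ (2 * H - 1) * (Real.exp (a * z - 2 * a * t) + Real.exp (-(a * z))))
      Filter.atTop
      (nhds (H * Real.Gamma (2 * H) / a ^ (2 * H))) := by
  have h2H : 0 < 2 * H := by linarith [hH.1]
  have hpow (t : ℝ) : IntervalIntegrable (fun z : ℝ => z ^ (2 * H - 1)) volume 0 t :=
    intervalIntegral.intervalIntegrable_rpow' (by linarith)
  have hsplit (t : ℝ) :
      ∫ z in (0:ℝ)..t, z ^ (2 * H - 1) * (exp (a * z - 2 * a * t) + exp (-(a * z))) =
        (∫ z in (0:ℝ)..t, z ^ (2 * H - 1) * exp (a * z - 2 * a * t)) +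
          ∫ z in (0:ℝ)..t, z ^ (2 * H - 1) * exp (-(a * z)) := by
    simp_rw [mul_add]
    exact intervalIntegral.integral_add ((hpow t).mul_continuousOn (by fun_prop))
      ((hpow t).mul_continuousOn (by fun_prop))
  simp_rw [hsplit, mul_div_assoc]
  simpa using ((tendsto_intervalIntegral_rpow_mul_exp_sub h2H ha).add
    (tendsto_intervalIntegral_rpow_mul_exp_neg_mul h2H ha)).const_mul H
end

section
/- Let H ∈ [1/2, 1) and a > 0. Then the function V_t² := H ∫₀ᵗ z^{2H−1} ( e^{az − 2at} + e^{−az} ) dz is nondecreasing in t on [0, ∞), and sup_{t ≥ 0} V_t² = H Γ(2H) / a^{2H}, where Γ denotes the Gamma function. In particular, for all s > 0 one has s^{2H−1} e^{as} ≥ a ∫₀ˢ z^{2H−1} e^{az} dz. -/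
/-!
Write `F t = ∫₀ᵗ z^p e^{az} dz` with `p = 2H - 1 ≥ 0`. Then
`V_t² / H = e^{-2at} F t + ∫₀ᵗ z^p e^{-az} dz` has derivative `2 e^{-2at} (t^p e^{at} - a F t)`,
which is nonnegative because `z^p ≤ t^p` on `[0, t]` and `a ∫₀ᵗ e^{az} dz = e^{at} - 1`.
The same bound gives `e^{-2at} F t ≤ t^p e^{-at} / a → 0`, so the supremum of the nondecreasing
function `V_t²` is `H` times the Gamma integral `∫₀^∞ z^p e^{-az} dz = Γ(p + 1) / a^{p + 1}`.
-/

open MeasureTheory Filter Set Topology Real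

theorem MonotoneOn.ciSup_Ici_eq_of_tendsto {α β : Type*} [SemilatticeSup α]
    [ConditionallyCompleteLinearOrder β] [TopologicalSpace β] [OrderTopology β]
    {f : α → β} {c : α} {l : β} (hf : MonotoneOn f (Ici c)) (hl : Tendsto f atTop (𝓝 l)) :
    ⨆ t : Ici c, f t = l :=
  (isLUB_of_tendsto_atTop (fun _ _ h => hf (Subtype.prop _) (Subtype.prop _) h)
    (tendsto_comp_val_Ici_atTop.mpr hl)).ciSup_eq

/-- The paper's `V_t² / H`, with `p = 2H - 1`. -/
noncomputable def scaledVariance (p a t : ℝ) : ℝ :=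
  ∫ z in (0:ℝ)..t, z ^ p * (exp (a * z - 2 * a * t) + exp (-(a * z)))

section
variable {p : ℝ}

theorem mul_integral_rpow_mul_exp_le (hp : 0 ≤ p) (a : ℝ) {s : ℝ} (hs : 0 ≤ s) :
    a * (∫ z in (0:ℝ)..s, z ^ p * exp (a * z)) ≤ s ^ p * exp (a * s) := by
  rcases le_or_gt a 0 with ha | ha
  · refine (mul_nonpos_of_nonpos_of_nonneg ha ?_).trans (by positivity)
    exact intervalIntegral.integral_nonneg hs fun z hz =>
      mul_nonneg (rpow_nonneg hz.1 p) (exp_pos _).le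
  have hexp : ∫ z in (0:ℝ)..s, a * exp (a * z) = exp (a * s) - 1 := by
    rw [intervalIntegral.integral_const_mul, intervalIntegral.integral_comp_mul_left exp ha.ne']
    simp [integral_exp, ha.ne']
  calc a * (∫ z in (0:ℝ)..s, z ^ p * exp (a * z))
      = ∫ z in (0:ℝ)..s, z ^ p * (a * exp (a * z)) := by
        rw [← intervalIntegral.integral_const_mul]; congr 1; ext z; ring
    _ ≤ ∫ z in (0:ℝ)..s, s ^ p * (a * exp (a * z)) := by
        refine intervalIntegral.integral_mono_on hs
          ((Continuous.intervalIntegrable (by fun_prop (disch := assumption))) _ _)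
          ((Continuous.intervalIntegrable (by fun_prop)) _ _) fun z hz => ?_
        gcongr
        exacts [hz.1, hz.2]
    _ = s ^ p * (exp (a * s) - 1) := by rw [intervalIntegral.integral_const_mul, hexp]
    _ ≤ s ^ p * exp (a * s) := by
        gcongr
        linarith

theorem scaledVariance_eq (hp : 0 ≤ p) (a t : ℝ) :
    scaledVariance p a t = exp (-(2 * a) * t) * (∫ z in (0:ℝ)..t, z ^ p * exp (a * z))
      + ∫ z in (0:ℝ)..t, z ^ p * exp (-(a * z)) := by
  have hsplit : ∀ z, z ^ p * (exp (a * z - 2 * a * t) + exp (-(a * z)))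
      = exp (-(2 * a) * t) * (z ^ p * exp (a * z)) + z ^ p * exp (-(a * z)) := by
    intro z
    rw [show a * z - 2 * a * t = -(2 * a) * t + a * z by ring, exp_add]
    ring
  rw [scaledVariance, funext hsplit, intervalIntegral.integral_add,
    intervalIntegral.integral_const_mul]
  all_goals exact (Continuous.intervalIntegrable (by fun_prop (disch := assumption))) _ _

theorem hasDerivAt_scaledVariance (hp : 0 ≤ p) (a t : ℝ) :
    HasDerivAt (scaledVariance p a)
      (2 * exp (-(2 * a) * t) *
        (t ^ p * exp (a * t) - a * ∫ z in (0:ℝ)..t, z ^ p * exp (a * z))) t := by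
  have hF : HasDerivAt (fun t => ∫ z in (0:ℝ)..t, z ^ p * exp (a * z)) (t ^ p * exp (a * t)) t :=
    (Continuous.integral_hasStrictDerivAt (by fun_prop (disch := assumption)) 0 t).hasDerivAt
  have hG : HasDerivAt (fun t => ∫ z in (0:ℝ)..t, z ^ p * exp (-(a * z)))
      (t ^ p * exp (-(a * t))) t :=
    (Continuous.integral_hasStrictDerivAt (by fun_prop (disch := assumption)) 0 t).hasDerivAt
  have hE : HasDerivAt (fun t => exp (-(2 * a) * t)) (exp (-(2 * a) * t) * -(2 * a)) t := by
    simpa using ((hasDerivAt_id t).const_mul (-(2 * a))).exp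
  rw [show scaledVariance p a = _ from funext (scaledVariance_eq hp a)]
  refine ((hE.mul hF).add hG).congr_deriv ?_
  rw [show -(a * t) = -(2 * a) * t + a * t by ring, exp_add]
  ring

theorem monotoneOn_scaledVariance (hp : 0 ≤ p) (a : ℝ) :
    MonotoneOn (scaledVariance p a) (Ici 0) := by
  have hderiv := hasDerivAt_scaledVariance hp a
  refine monotoneOn_of_hasDerivWithinAt_nonneg (convex_Ici 0)
    (continuous_iff_continuousAt.2 fun t => (hderiv t).continuousAt).continuousOn
    (fun t _ => (hderiv t).hasDerivWithinAt) fun t ht => ?_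
  rw [interior_Ici] at ht
  exact mul_nonneg (by positivity) (sub_nonneg.2 (mul_integral_rpow_mul_exp_le hp a ht.le))

theorem tendsto_exp_mul_integral_rpow_mul_exp (hp : 0 ≤ p) {a : ℝ} (ha : 0 < a) :
    Tendsto (fun t => exp (-(2 * a) * t) * ∫ z in (0:ℝ)..t, z ^ p * exp (a * z))
      atTop (𝓝 0) := by
  have hbound : Tendsto (fun t => a⁻¹ * (t ^ p * exp (-a * t))) atTop (𝓝 0) := by
    simpa using (tendsto_rpow_mul_exp_neg_mul_atTop_nhds_zero p a ha).const_mul a⁻¹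
  refine squeeze_zero' ?_ ?_ hbound <;> filter_upwards [eventually_ge_atTop 0] with t ht
  · exact mul_nonneg (exp_pos _).le
      (intervalIntegral.integral_nonneg ht fun z hz =>
        mul_nonneg (rpow_nonneg hz.1 p) (exp_pos _).le)
  · have hF := (le_inv_mul_iff₀ ha).2 (mul_integral_rpow_mul_exp_le hp a ht)
    calc exp (-(2 * a) * t) * ∫ z in (0:ℝ)..t, z ^ p * exp (a * z)
        ≤ exp (-(2 * a) * t) * (a⁻¹ * (t ^ p * exp (a * t))) := by gcongr
      _ = a⁻¹ * (t ^ p * exp (-a * t)) := by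
        rw [show -a * t = -(2 * a) * t + a * t by ring, exp_add]
        ring

theorem tendsto_integral_rpow_mul_exp_neg_mul (hp : -1 < p) {a : ℝ} (ha : 0 < a) :
    Tendsto (fun t => ∫ z in (0:ℝ)..t, z ^ p * exp (-(a * z))) atTop
      (𝓝 (Gamma (p + 1) / a ^ (p + 1))) := by
  have hint : IntegrableOn (fun z : ℝ => z ^ p * exp (-(a * z))) (Ioi 0) := by
    simpa using integrableOn_rpow_mul_exp_neg_mul_rpow hp one_pos ha
  have hGamma : ∫ z in Ioi (0:ℝ), z ^ p * exp (-(a * z)) = Gamma (p + 1) / a ^ (p + 1) := by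
    have := integral_rpow_mul_exp_neg_mul_Ioi (by linarith : 0 < p + 1) ha
    rw [add_sub_cancel_right] at this
    rw [this, one_div, inv_rpow ha.le]
    ring
  simpa [hGamma] using intervalIntegral_tendsto_integral_Ioi 0 hint tendsto_id

theorem tendsto_scaledVariance (hp : 0 ≤ p) {a : ℝ} (ha : 0 < a) :
    Tendsto (scaledVariance p a) atTop (𝓝 (Gamma (p + 1) / a ^ (p + 1))) := by
  rw [show scaledVariance p a = _ from funext (scaledVariance_eq hp a)]
  simpa using (tendsto_exp_mul_integral_rpow_mul_exp hp ha).add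
    (tendsto_integral_rpow_mul_exp_neg_mul (by linarith) ha)

end

/-- For `H ∈ [1/2, 1)` and `a > 0`, the function
`V_t² = H ∫₀ᵗ z^{2H−1}(e^{az−2at} + e^{−az}) dz` is nondecreasing in `t` on `[0,∞)`, its
supremum over `t ≥ 0` equals `H Γ(2H)/a^{2H}`, and in particular for all `s > 0` one has
`s^{2H−1} e^{as} ≥ a ∫₀ˢ z^{2H−1} e^{az} dz`. -/
theorem variance_monotone_and_sup
    (H : ℝ) (hH : H ∈ Set.Ico (1/2 : ℝ) 1) (a : ℝ) (ha : 0 < a) :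
    MonotoneOn
      (fun t : ℝ => H * ∫ z in (0:ℝ)..t,
        z ^ (2 * H - 1) * (Real.exp (a * z - 2 * a * t) + Real.exp (-(a * z))))
      (Set.Ici 0)
    ∧ (⨆ t : Set.Ici (0:ℝ), H * ∫ z in (0:ℝ)..(t : ℝ),
          z ^ (2 * H - 1) * (Real.exp (a * z - 2 * a * (t : ℝ)) + Real.exp (-(a * z))))
        = H * Real.Gamma (2 * H) / a ^ (2 * H)
    ∧ ∀ s > (0:ℝ),
        a * (∫ z in (0:ℝ)..s, z ^ (2 * H - 1) * Real.exp (a * z))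
          ≤ s ^ (2 * H - 1) * Real.exp (a * s) := by
  have hp : 0 ≤ 2 * H - 1 := by linarith [hH.1]
  have hmono : MonotoneOn (fun t => H * scaledVariance (2 * H - 1) a t) (Ici 0) :=
    fun _ hs _ ht hst => mul_le_mul_of_nonneg_left (monotoneOn_scaledVariance hp a hs ht hst)
      (by linarith [hH.1])
  have hlim : Tendsto (fun t => H * scaledVariance (2 * H - 1) a t) atTop
      (𝓝 (H * Real.Gamma (2 * H) / a ^ (2 * H))) := by
    simpa [mul_div_assoc] using (tendsto_scaledVariance hp ha).const_mul H
  exact ⟨hmono, hmono.ciSup_Ici_eq_of_tendsto hlim,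
    fun s hs => mul_integral_rpow_mul_exp_le hp a hs.le⟩
end
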